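/- arXiv:2507.19758 — 10 statements merged into one kernel-verified Lean document; each statement's English description precedes it below -/
import Mathlib

section
/- Let (H, ▷) be a relaxed weak post-Hopf algebra over a field k of characteristic zero. Then for all x ∈ H, x ▷ 1 = ε(x)·1, where ε is the counit of H and 1 is the unit of H. -/
open TensorProduct Coalgebra

/-- A relaxed weak post-Hopf structure on a Hopf algebra `H` over `k`:
a bilinear operation `t` (written `x ▷ y := t x y`) which, as a map `H ⊗ H → H`, is a
coalgebra homomorphism (i.e. `Δ(x ▷ y) = (x₁ ▷ y₁) ⊗ (x₂ ▷ y₂)` and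
`ε(x ▷ y) = ε(x) ε(y)`), and which satisfies `x ▷ (y z) = (x₁ ▷ y) (x₂ ▷ z)` and
`x ▷ (y ▷ z) = (x₁ (x₂ ▷ y)) ▷ z` (Sweedler notation expressed via `comul`). -/
structure IsRelaxedWeakPostHopf (k : Type*) {H : Type*} [CommSemiring k] [Semiring H]
    [HopfAlgebra k H] (t : H →ₗ[k] H →ₗ[k] H) : Prop where
  comul_hom : ∀ x y : H,
    comul (R := k) (t x y) =
      (TensorProduct.map (TensorProduct.lift t) (TensorProduct.lift t))
        ((TensorProduct.tensorTensorTensorComm k H H H H)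
          (comul (R := k) x ⊗ₜ[k] comul (R := k) y))
  counit_hom : ∀ x y : H,
    counit (R := k) (t x y) = counit (R := k) x * counit (R := k) y
  mul_compat : ∀ x y z : H,
    t x (y * z) =
      (LinearMap.mul' k H ∘ₗ TensorProduct.map (t.flip y) (t.flip z)) (comul (R := k) x)
  act_compat : ∀ x y z : H,
    t x (t y z) =
      (t.flip z ∘ₗ LinearMap.mul' k H ∘ₗ TensorProduct.map LinearMap.id (t.flip y))
        (comul (R := k) x)

section Aux

open HopfAlgebra

variable {k H : Type*} [Field k] [Ring H] [HopfAlgebra k H]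
  {t : H →ₗ[k] H →ₗ[k] H} (ht : IsRelaxedWeakPostHopf k t)
include ht

/-- The map `a ↦ a ▷ 1` is comultiplicative. -/
lemma rwph_comul_act_one (a : H) :
    comul (R := k) (t a 1) =
      TensorProduct.map (t.flip 1) (t.flip 1) (comul (R := k) a) := by
  rw [ht.comul_hom a 1, Bialgebra.comul_one]
  have : ∀ w : H ⊗[k] H,
      (TensorProduct.map (TensorProduct.lift t) (TensorProduct.lift t))
        ((TensorProduct.tensorTensorTensorComm k H H H H)
          (w ⊗ₜ[k] ((1 : H) ⊗ₜ[k] (1 : H)))) =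
      TensorProduct.map (t.flip 1) (t.flip 1) w := by
    intro w
    induction w using TensorProduct.induction_on with
    | zero => simp
    | tmul a b => simp
    | add u v hu hv =>
        rw [TensorProduct.add_tmul, map_add, map_add, map_add, hu, hv]
  exact this _

/-- `ε (a ▷ 1) = ε a`. -/
lemma rwph_counit_act_one (a : H) :
    counit (R := k) (t a 1) = counit (R := k) a := by
  rw [ht.counit_hom, Bialgebra.counit_one, mul_one]

/-- `a ▷ 1 = ∑ (a₁ ▷ 1)(a₂ ▷ 1)` : the map `a ↦ a ▷ 1` equals its convolution square. -/
lemma rwph_act_one_conv_sq (a : H) (r : Coalgebra.Repr k a (H × H)) :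
    t a 1 = ∑ i ∈ r.index, t (r.left i) 1 * t (r.right i) 1 := by
  have h := ht.mul_compat a 1 1
  rw [mul_one] at h
  rw [h, ← r.eq, map_sum]
  simp [LinearMap.mul'_apply]

omit ht in
/-- A representation of `comul (a ▷ 1)` obtained from one of `comul a`. -/
noncomputable def rwphRepr (ht : IsRelaxedWeakPostHopf k t) (a : H) (r : Coalgebra.Repr k a (H × H)) :
    Coalgebra.Repr k (t a 1) (H × H) where
  index := r.index
  left := fun i => t (r.left i) 1
  right := fun i => t (r.right i) 1
  eq := by
    rw [rwph_comul_act_one ht, ← r.eq, map_sum]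
    simp

/-- `∑ S(a₁ ▷ 1)(a₂ ▷ 1) = ε(a) • 1` : the antipode composed with `· ▷ 1` is a left
convolution inverse of `· ▷ 1`. -/
lemma rwph_antipode_conv (a : H) (r : Coalgebra.Repr k a (H × H)) :
    ∑ i ∈ r.index, antipode (R := k) (t (r.left i) 1) * t (r.right i) 1 =
      counit (R := k) a • (1 : H) := by
  have := sum_antipode_mul_eq_smul (rwphRepr ht a r)
  rw [rwph_counit_act_one ht] at this
  exact this

end Aux

/-- For a relaxed weak post-Hopf algebra `(H, ▷)` over a field of characteristic zero,
`x ▷ 1 = ε(x) • 1` for all `x`. -/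
theorem act_one_eq_counit_smul_one {k H : Type*} [Field k] [CharZero k] [Ring H] [HopfAlgebra k H]
    (t : H →ₗ[k] H →ₗ[k] H) (ht : IsRelaxedWeakPostHopf k t) (x : H) :
    t x 1 = counit (R := k) x • (1 : H) := by
  classical
  set r := ℛ k x with hr
  -- counit law: `x = ∑ ε(x₁) • x₂`
  have hx : x = ∑ i ∈ r.index, counit (R := k) (r.left i) • r.right i := by
    have h := congrArg (TensorProduct.lid k H) (sum_counit_tmul_eq (R := k) r)
    simp only [map_sum, TensorProduct.lid_tmul, one_smul] at h
    exact h.symm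
  -- Step 1 : `t x 1 = ∑ ε(x₁) • t x₂ 1`
  have step1 : t x 1 = ∑ i ∈ r.index, counit (R := k) (r.left i) • t (r.right i) 1 := by
    conv_lhs => rw [hx]
    rw [map_sum, LinearMap.sum_apply]
    simp
  -- Step 2 : expand `ε(x₁) • 1` using the antipode convolution identity for `x₁`
  have step2 : t x 1 = ∑ i ∈ r.index, ∑ j ∈ (ℛ k (r.left i)).index,
      HopfAlgebra.antipode (R := k) (t ((ℛ k (r.left i)).left j) 1) *
        (t ((ℛ k (r.left i)).right j) 1 * t (r.right i) 1) := by
    rw [step1]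
    refine Finset.sum_congr rfl fun i _ => ?_
    calc counit (R := k) (r.left i) • t (r.right i) 1
        = (counit (R := k) (r.left i) • (1 : H)) * t (r.right i) 1 := by
          rw [smul_mul_assoc, one_mul]
      _ = (∑ j ∈ (ℛ k (r.left i)).index,
            HopfAlgebra.antipode (R := k) (t ((ℛ k (r.left i)).left j) 1) *
              t ((ℛ k (r.left i)).right j) 1) * t (r.right i) 1 := by
          rw [rwph_antipode_conv ht _ (ℛ k (r.left i))]
      _ = _ := by rw [Finset.sum_mul]; simp [mul_assoc]
  -- Step 3 : coassociativity lets us reassociate the Sweedler legs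
  have key := congrArg (LinearMap.mul' k H ∘ₗ LinearMap.lTensor H (LinearMap.mul' k H))
    (sum_map_tmul_tmul_eq (R := k)
      (HopfAlgebra.antipode (R := k) ∘ₗ t.flip 1) (t.flip 1) (t.flip 1) x
      (repr := r) (a₁ := fun i => ℛ k (r.left i)) (a₂ := fun i => ℛ k (r.right i)))
  simp only [map_sum, LinearMap.comp_apply, LinearMap.lTensor_tmul, LinearMap.mul'_apply,
    LinearMap.flip_apply] at key
  rw [step2, ← key]
  -- Step 4 : contract with the convolution-square identity and the antipode identity
  have hcontract : ∀ i ∈ r.index,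
      ∑ j ∈ (ℛ k (r.right i)).index,
        HopfAlgebra.antipode (R := k) (t (r.left i) 1) *
          (t ((ℛ k (r.right i)).left j) 1 * t ((ℛ k (r.right i)).right j) 1) =
      HopfAlgebra.antipode (R := k) (t (r.left i) 1) * t (r.right i) 1 := by
    intro i _
    rw [← Finset.mul_sum, ← rwph_act_one_conv_sq ht (r.right i) (ℛ k (r.right i))]
  rw [Finset.sum_congr rfl hcontract, rwph_antipode_conv ht x r]
end

section
/- Let ▷ be a relaxed weak post-Hopf structure on Sweedler's 4-dimensional Hopf algebra H₄. Then g ▷ ν is a (g▷g, 1)-primitive element of H₄, i.e., Δ(g▷ν) = (g▷g)⊗(g▷ν) + (g▷ν)⊗1. -/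
open TensorProduct Coalgebra

/-- `H`, together with the chosen elements `g` and `ν`, is a copy of Sweedler's
4-dimensional Hopf algebra over `k`: `{1, g, ν, gν}` is a basis, the defining relations
`g² = 1`, `ν² = 0`, `gν + νg = 0` hold, and the comultiplication, counit and antipode
take the prescribed values on `g` and `ν`. -/
structure IsSweedlerHopf (k : Type*) {H : Type*} [Field k] [Ring H]
    [HopfAlgebra k H] (g ν : H) : Prop where
  g_sq : g * g = 1
  ν_sq : ν * ν = 0
  anticomm : g * ν + ν * g = 0
  comul_g : comul (R := k) g = g ⊗ₜ[k] g
  comul_ν : comul (R := k) ν = g ⊗ₜ[k] ν + ν ⊗ₜ[k] (1 : H)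
  counit_g : counit (R := k) g = 1
  counit_ν : counit (R := k) ν = 0
  antipode_g : HopfAlgebra.antipode (R := k) g = g
  antipode_ν : HopfAlgebra.antipode (R := k) ν = -(g * ν)
  basis_indep : LinearIndependent k ![(1 : H), g, ν, g * ν]
  basis_span : Submodule.span k {(1 : H), g, ν, g * ν} = ⊤

/-- For a relaxed weak post-Hopf structure on Sweedler's Hopf algebra, `g ▷ ν` is
`(g ▷ g, 1)`-primitive. -/
theorem sweedler_act_g_ν_primitive {k H : Type*} [Field k] [CharZero k] [Ring H] [HopfAlgebra k H]
    (g ν : H) (hs : IsSweedlerHopf k g ν)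
    (t : H →ₗ[k] H →ₗ[k] H) (ht : IsRelaxedWeakPostHopf k t) :
    comul (R := k) (t g ν) = t g g ⊗ₜ[k] t g ν + t g ν ⊗ₜ[k] (1 : H) := by
  classical
  -- set up the basis
  have hsp' : ⊤ ≤ Submodule.span k (Set.range ![(1 : H), g, ν, g * ν]) := by
    rw [show Set.range ![(1 : H), g, ν, g * ν] = {(1 : H), g, ν, g * ν} by
      ext x; simp [Fin.exists_fin_succ_pi]; constructor <;> rintro (h|h|h|h) <;> simp [h]]
    exact hs.basis_span.ge
  let b : Module.Basis (Fin 4) k H := Module.Basis.mk hs.basis_indep hsp'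
  have hb0 : b 0 = 1 := by simp [b]
  have hb1 : b 1 = g := by simp [b]
  have hb2 : b 2 = ν := by simp [b]
  have hb3 : b 3 = g * ν := by simp [b]
  set a := t g (1 : H) with ha_def
  -- key properties of a
  have hca : comul (R := k) a = a ⊗ₜ[k] a := by
    have := ht.comul_hom g 1
    simpa [hs.comul_g, Algebra.TensorProduct.one_def, tensorTensorTensorComm_tmul] using this
  have haa : a * a = a := by
    have := ht.mul_compat g 1 1
    simp only [one_mul, LinearMap.coe_comp, Function.comp_apply, hs.comul_g, map_tmul,
      LinearMap.flip_apply, LinearMap.mul'_apply] at this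
    exact this.symm
  have hεa : counit (R := k) a = 1 := by
    simpa [hs.counit_g] using ht.counit_hom g 1
  -- coordinates
  set c : Fin 4 → k := fun i => b.repr a i with hc
  have hrepr : a = c 0 • (1 : H) + c 1 • g + c 2 • ν + c 3 • (g * ν) := by
    have := b.sum_repr a
    rw [Fin.sum_univ_four, hb0, hb1, hb2, hb3] at this
    exact this.symm
  have hcomul3 : comul (R := k) (g * ν) = (1 : H) ⊗ₜ[k] (g * ν) + (g * ν) ⊗ₜ[k] g := by
    rw [Bialgebra.comul_mul, hs.comul_g, hs.comul_ν, mul_add,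
      Algebra.TensorProduct.tmul_mul_tmul, Algebra.TensorProduct.tmul_mul_tmul,
      hs.g_sq, mul_one]
  have key : a ⊗ₜ[k] a =
      c 0 • (b 0 ⊗ₜ[k] b 0) + c 1 • (b 1 ⊗ₜ[k] b 1) + c 2 • (b 1 ⊗ₜ[k] b 2)
      + c 2 • (b 2 ⊗ₜ[k] b 0) + c 3 • (b 0 ⊗ₜ[k] b 3) + c 3 • (b 3 ⊗ₜ[k] b 1) := by
    rw [← hca]
    conv_lhs => rw [hrepr]
    rw [hb0, hb1, hb2, hb3]
    simp only [map_add, map_smul, Bialgebra.comul_one, Algebra.TensorProduct.one_def,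
      hs.comul_g, hs.comul_ν, hcomul3, smul_add]
    abel
  have coeff : ∀ i j : Fin 4, c i * c j =
      (b.tensorProduct b).repr (c 0 • (b 0 ⊗ₜ[k] b 0) + c 1 • (b 1 ⊗ₜ[k] b 1)
        + c 2 • (b 1 ⊗ₜ[k] b 2) + c 2 • (b 2 ⊗ₜ[k] b 0) + c 3 • (b 0 ⊗ₜ[k] b 3)
        + c 3 • (b 3 ⊗ₜ[k] b 1)) (i, j) := by
    intro i j
    rw [← key]
    simp [Module.Basis.tensorProduct_repr_tmul_apply, hc, mul_comm]
  have h00 : c 0 * c 0 = c 0 := by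
    have := coeff 0 0
    simpa [-Prod.mk_zero_zero, -Prod.mk_one_one, Module.Basis.tensorProduct_repr_tmul_apply, Module.Basis.repr_self, Finsupp.single_apply] using this
  have h11 : c 1 * c 1 = c 1 := by
    have := coeff 1 1
    simpa [-Prod.mk_zero_zero, -Prod.mk_one_one, Module.Basis.tensorProduct_repr_tmul_apply, Module.Basis.repr_self, Finsupp.single_apply] using this
  have h01 : c 0 * c 1 = 0 := by
    have := coeff 0 1
    simpa [-Prod.mk_zero_zero, -Prod.mk_one_one, Module.Basis.tensorProduct_repr_tmul_apply, Module.Basis.repr_self, Finsupp.single_apply] using this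
  have h22 : c 2 * c 2 = 0 := by
    have := coeff 2 2
    simpa [-Prod.mk_zero_zero, -Prod.mk_one_one, Module.Basis.tensorProduct_repr_tmul_apply, Module.Basis.repr_self, Finsupp.single_apply] using this
  have h03 : c 0 * c 3 = c 3 := by
    have := coeff 0 3
    simpa [-Prod.mk_zero_zero, -Prod.mk_one_one, Module.Basis.tensorProduct_repr_tmul_apply, Module.Basis.repr_self, Finsupp.single_apply] using this
  have h30 : c 3 * c 0 = 0 := by
    have := coeff 3 0
    simpa [-Prod.mk_zero_zero, -Prod.mk_one_one, Module.Basis.tensorProduct_repr_tmul_apply, Module.Basis.repr_self, Finsupp.single_apply] using this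
  have hc2 : c 2 = 0 := mul_self_eq_zero.mp h22
  have hc3 : c 3 = 0 := by rw [← h03, mul_comm]; exact h30
  have hsum : c 0 + c 1 = 1 := by
    have hε : counit (R := k) a = c 0 + c 1 := by
      conv_lhs => rw [hrepr]
      simp [map_add, hs.counit_g, hs.counit_ν, Bialgebra.counit_mul]
    rw [← hε, hεa]
  -- conclude a = 1
  have ha1 : a = 1 := by
    have hsplit : c 0 * (c 0 - 1) = 0 := by ring_nf; linear_combination h00
    rcases mul_eq_zero.mp hsplit with h | h
    · -- c 0 = 0, so a = g, contradiction with a * a = a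
      exfalso
      have hc1 : c 1 = 1 := by rw [h, zero_add] at hsum; exact hsum
      have hag : a = g := by rw [hrepr, h, hc1, hc2, hc3]; simp
      have : (1 : H) = g := by rw [← hs.g_sq, ← hag, haa, hag]
      have hz : (1 : k) • (1 : H) + (-1 : k) • g + (0 : k) • ν + (0 : k) • (g * ν) = 0 := by
        simp [← this]
      have hli' := Fintype.linearIndependent_iff.mp hs.basis_indep ![1, -1, 0, 0]
      have := hli' (by rw [Fin.sum_univ_four]; simpa using hz) 0
      simp at this
    · have hc0 : c 0 = 1 := sub_eq_zero.mp h
      have hc1 : c 1 = 0 := by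
        have := h01; rw [hc0, one_mul] at this; exact this
      rw [hrepr, hc0, hc1, hc2, hc3]; simp
  -- main computation
  have := ht.comul_hom g ν
  rw [hs.comul_g, hs.comul_ν, tmul_add] at this
  simp only [map_add, tensorTensorTensorComm_tmul, map_tmul, lift.tmul] at this
  rw [this, ← ha_def, ha1]
end

section
/- Let ▷ be a relaxed weak post-Hopf structure on Sweedler's 4-dimensional Hopf algebra H₄. Then 1 ▷ g = 1 or 1 ▷ g = g. (More precisely, writing 1▷g = t₁·1 + t₂·g + t₃·ν + t₄·gν in the basis, the relation 1▷1 = (1▷g)(1▷g) forces t₁² + t₂² = 1 and t₁t₂ = t₁t₃ = t₁t₄ = 0, and the coalgebra homomorphism property of ▷ excludes all solutions except 1▷g = 1 and 1▷g = g.) -/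
open TensorProduct Coalgebra

/-- For a relaxed weak post-Hopf structure on Sweedler's Hopf algebra,
`1 ▷ g = 1` or `1 ▷ g = g`. -/
theorem sweedler_act_one_g {k H : Type*} [Field k] [CharZero k] [Ring H] [HopfAlgebra k H]
    (g ν : H) (hs : IsSweedlerHopf k g ν)
    (t : H →ₗ[k] H →ₗ[k] H) (ht : IsRelaxedWeakPostHopf k t) :
    t 1 g = 1 ∨ t 1 g = g := by
  have hspan : ⊤ ≤ Submodule.span k (Set.range ![(1 : H), g, ν, g * ν]) := by
    rw [show Set.range ![(1 : H), g, ν, g * ν] = {(1 : H), g, ν, g * ν} by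
      ext x
      simp [Matrix.range_cons, Matrix.range_empty]
      tauto]
    rw [hs.basis_span]
  let B : Module.Basis (Fin 4) k H := Module.Basis.mk hs.basis_indep hspan
  have e0 : B 0 = 1 := by simp [B, Module.Basis.mk_apply]
  have e1 : B 1 = g := by simp [B, Module.Basis.mk_apply]
  have e2 : B 2 = ν := by simp [B, Module.Basis.mk_apply]
  have e3 : B 3 = g * ν := by simp [B, Module.Basis.mk_apply]
  set u : H := t 1 g with hu_def
  set a := B.repr u 0 with ha
  set b := B.repr u 1 with hb
  set c := B.repr u 2 with hc
  set d := B.repr u 3 with hd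
  have hu : u = a • (1 : H) + b • g + c • ν + d • (g * ν) := by
    conv_lhs => rw [← B.sum_repr u]
    rw [Fin.sum_univ_four, e0, e1, e2, e3]
  -- repr of basis elements
  have r1 : B.repr (1 : H) = Finsupp.single 0 1 := by rw [← e0, B.repr_self]
  have rg : B.repr g = Finsupp.single 1 1 := by rw [← e1, B.repr_self]
  have rν : B.repr ν = Finsupp.single 2 1 := by rw [← e2, B.repr_self]
  have rgν : B.repr (g * ν) = Finsupp.single 3 1 := by rw [← e3, B.repr_self]
  -- comul of gν
  have hcomul_one : comul (R := k) (1 : H) = (1 : H) ⊗ₜ[k] (1 : H) := by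
    rw [Bialgebra.comul_one, Algebra.TensorProduct.one_def]
  have hcgν : comul (R := k) (g * ν) = (1 : H) ⊗ₜ[k] (g * ν) + (g * ν) ⊗ₜ[k] g := by
    rw [Bialgebra.comul_mul, hs.comul_g, hs.comul_ν, mul_add,
      Algebra.TensorProduct.tmul_mul_tmul, Algebra.TensorProduct.tmul_mul_tmul,
      hs.g_sq, mul_one]
  -- key: comul u = u ⊗ u
  have key : comul (R := k) u = u ⊗ₜ[k] u := by
    rw [hu_def, ht.comul_hom, hcomul_one, hs.comul_g, tensorTensorTensorComm_tmul,
      TensorProduct.map_tmul, TensorProduct.lift.tmul]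
  -- expand comul u
  have hL : comul (R := k) u = a • ((1:H) ⊗ₜ[k] (1:H)) + b • (g ⊗ₜ[k] g)
      + (c • (g ⊗ₜ[k] ν) + c • (ν ⊗ₜ[k] (1:H)))
      + (d • ((1:H) ⊗ₜ[k] (g*ν)) + d • ((g*ν) ⊗ₜ[k] g)) := by
    conv_lhs => rw [hu]
    rw [map_add, map_add, map_add, map_smul, map_smul, map_smul, map_smul,
      hcomul_one, hs.comul_g, hs.comul_ν, hcgν, smul_add, smul_add]
  have key2 := hL.symm.trans key
  -- coefficients
  have coeff : ∀ i j : Fin 4,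
      (B.tensorProduct B).repr
        (a • ((1:H) ⊗ₜ[k] (1:H)) + b • (g ⊗ₜ[k] g)
        + (c • (g ⊗ₜ[k] ν) + c • (ν ⊗ₜ[k] (1:H)))
        + (d • ((1:H) ⊗ₜ[k] (g*ν)) + d • ((g*ν) ⊗ₜ[k] g))) (i, j)
      = (B.repr u j) • (B.repr u i) := by
    intro i j
    rw [key2, Module.Basis.tensorProduct_repr_tmul_apply]
  have eq00 := coeff 0 0
  have eq01 := coeff 0 1
  have eq22 := coeff 2 2
  have eq33 := coeff 3 3
  simp only [map_add, map_smul, Finsupp.add_apply, Finsupp.smul_apply,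
    Module.Basis.tensorProduct_repr_tmul_apply, r1, rg, rν, rgν, Finsupp.single_apply,
    ← ha, ← hb, ← hc, ← hd, smul_eq_mul] at eq00 eq01 eq22 eq33
  simp at eq00 eq01 eq22 eq33
  -- counit
  have hcount : counit (R := k) u = 1 := by
    rw [hu_def, ht.counit_hom, Bialgebra.counit_one, hs.counit_g, one_mul]
  have habd : a + b = 1 := by
    have := hcount
    rw [hu, map_add, map_add, map_add, map_smul, map_smul, map_smul, map_smul,
      Bialgebra.counit_one, hs.counit_g, hs.counit_ν, Bialgebra.counit_mul,
      hs.counit_g, hs.counit_ν] at this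
    simpa using this
  have hc0 : c = 0 := eq22
  have hd0 : d = 0 := eq33
  rcases eq01 with h | h
  · left
    have ha1 : a = 1 := by rwa [h, add_zero] at habd
    rw [hu, h, ha1, hc0, hd0]
    simp
  · right
    have hb1 : b = 1 := by rwa [h, zero_add] at habd
    rw [hu, h, hb1, hc0, hd0]
    simp
end

section
/- Let ▷ be a relaxed weak post-Hopf structure on Sweedler's 4-dimensional Hopf algebra H₄ with 1 ▷ g = 1. Then g ▷ g = 1. -/
open TensorProduct Coalgebra

/-- For a relaxed weak post-Hopf structure on Sweedler's Hopf algebra with `1 ▷ g = 1`,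
one has `g ▷ g = 1`. -/
theorem sweedler_act_g_g_of_one_g_eq_one {k H : Type*} [Field k] [CharZero k] [Ring H] [HopfAlgebra k H]
    (g ν : H) (hs : IsSweedlerHopf k g ν)
    (t : H →ₗ[k] H →ₗ[k] H) (ht : IsRelaxedWeakPostHopf k t)
    (h1g : t 1 g = 1) :
    t g g = 1 := by
  have hg2 := hs.g_sq
  have hΔg := hs.comul_g
  have hΔν := hs.comul_ν
  have hεg := hs.counit_g
  have hεν := hs.counit_ν
  have hind := hs.basis_indep
  have hspan := hs.basis_span
  have comul_hom := ht.comul_hom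
  have counit_hom := ht.counit_hom
  have act_compat := ht.act_compat
  set a := t g g with ha_def
  have hΔa : comul (R := k) a = a ⊗ₜ[k] a := by
    have h := comul_hom g g
    rw [hΔg] at h
    simpa using h
  have hεa : counit (R := k) a = 1 := by
    have h := counit_hom g g
    rw [hεg] at h; simpa using h
  -- the basis
  have hspan' : ⊤ ≤ Submodule.span k (Set.range ![(1:H), g, ν, g*ν]) := by
    rw [show Set.range ![(1:H), g, ν, g*ν] = {(1:H), g, ν, g*ν} by
      simp only [Matrix.range_cons, Matrix.range_empty, Set.union_empty,
        Set.union_insert, Set.union_singleton]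
      ext x; simp; tauto]
    rw [hspan]
  let B : Module.Basis (Fin 4) k H := Module.Basis.mk hind hspan'
  have hB : ∀ i, B i = ![(1:H), g, ν, g*ν] i := fun i => by
    simp [B, Module.Basis.mk_apply]
  have e0 : B.repr (1:H) = Finsupp.single 0 1 := by
    rw [show (1:H) = B 0 by simp [hB], Module.Basis.repr_self]
  have e1 : B.repr g = Finsupp.single 1 1 := by
    rw [show g = B 1 by simp [hB], Module.Basis.repr_self]
  have e2 : B.repr ν = Finsupp.single 2 1 := by
    rw [show ν = B 2 by simp [hB], Module.Basis.repr_self]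
  have e3 : B.repr (g*ν) = Finsupp.single 3 1 := by
    rw [show g*ν = B 3 by simp [hB], Module.Basis.repr_self]
  set c : Fin 4 → k := fun i => B.repr a i with hc
  have ha : a = c 0 • (1:H) + c 1 • g + c 2 • ν + c 3 • (g*ν) := by
    have h := B.sum_repr a
    rw [Fin.sum_univ_four] at h
    simp only [hB] at h
    simpa [hc] using h.symm
  let T := Module.Basis.tensorProduct B B
  have key : ∀ i j : Fin 4, c i * c j = T.repr (comul (R := k) a) (i, j) := by
    intro i j
    rw [hΔa, Module.Basis.tensorProduct_repr_tmul_apply, smul_eq_mul, mul_comm]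
  have lhs : ∀ i j : Fin 4, T.repr (comul (R := k) a) (i, j) =
      c 0 * (B.repr 1 i * B.repr 1 j) + c 1 * (B.repr g i * B.repr g j)
      + c 2 * (B.repr g i * B.repr ν j + B.repr ν i * B.repr 1 j)
      + c 3 * (B.repr 1 i * B.repr (g*ν) j + B.repr (g*ν) i * B.repr g j) := by
    intro i j
    conv_lhs => rw [ha]
    simp [map_add, Bialgebra.comul_mul, hΔg, hΔν, mul_add,
      Algebra.TensorProduct.tmul_mul_tmul, hg2, Algebra.TensorProduct.one_def,
      tmul_add, add_tmul, T, Module.Basis.tensorProduct_repr_tmul_apply, mul_add]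
    ring
  have evalpt : ∀ i j : Fin 4, T.repr (comul (R := k) a) (i, j) =
      c 0 * ((if (0:Fin 4) = i then 1 else 0) * (if (0:Fin 4) = j then 1 else 0))
      + c 1 * ((if (1:Fin 4) = i then 1 else 0) * (if (1:Fin 4) = j then 1 else 0))
      + c 2 * ((if (1:Fin 4) = i then 1 else 0) * (if (2:Fin 4) = j then 1 else 0)
          + (if (2:Fin 4) = i then 1 else 0) * (if (0:Fin 4) = j then 1 else 0))
      + c 3 * ((if (0:Fin 4) = i then 1 else 0) * (if (3:Fin 4) = j then 1 else 0)
          + (if (3:Fin 4) = i then 1 else 0) * (if (1:Fin 4) = j then 1 else 0)) := by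
    intro i j
    rw [lhs i j, e0, e1, e2, e3]
    simp [Finsupp.single_apply]
  have h00 : c 0 * c 0 = c 0 := by rw [key 0 0, evalpt 0 0]; simp [Fin.ext_iff, show ((3:Fin 4).val = 3) from rfl, show ((2:Fin 4).val = 2) from rfl, show ((1:Fin 4).val = 1) from rfl, show ((0:Fin 4).val = 0) from rfl]
  have h01 : c 0 * c 1 = 0 := by rw [key 0 1, evalpt 0 1]; simp [Fin.ext_iff, show ((3:Fin 4).val = 3) from rfl, show ((2:Fin 4).val = 2) from rfl, show ((1:Fin 4).val = 1) from rfl, show ((0:Fin 4).val = 0) from rfl]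
  have h02 : c 0 * c 2 = 0 := by rw [key 0 2, evalpt 0 2]; simp [Fin.ext_iff, show ((3:Fin 4).val = 3) from rfl, show ((2:Fin 4).val = 2) from rfl, show ((1:Fin 4).val = 1) from rfl, show ((0:Fin 4).val = 0) from rfl]
  have h20 : c 2 * c 0 = c 2 := by rw [key 2 0, evalpt 2 0]; simp [Fin.ext_iff, show ((3:Fin 4).val = 3) from rfl, show ((2:Fin 4).val = 2) from rfl, show ((1:Fin 4).val = 1) from rfl, show ((0:Fin 4).val = 0) from rfl]
  have h03 : c 0 * c 3 = c 3 := by rw [key 0 3, evalpt 0 3]; simp [Fin.ext_iff, show ((3:Fin 4).val = 3) from rfl, show ((2:Fin 4).val = 2) from rfl, show ((1:Fin 4).val = 1) from rfl, show ((0:Fin 4).val = 0) from rfl]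
  have h30 : c 3 * c 0 = 0 := by rw [key 3 0, evalpt 3 0]; simp [Fin.ext_iff, show ((3:Fin 4).val = 3) from rfl, show ((2:Fin 4).val = 2) from rfl, show ((1:Fin 4).val = 1) from rfl, show ((0:Fin 4).val = 0) from rfl]
  have hsum : c 0 + c 1 = 1 := by
    have h : counit (R := k) a = c 0 + c 1 := by
      conv_lhs => rw [ha]
      simp [map_add, hεg, hεν, Bialgebra.counit_mul, Bialgebra.counit_one,
        smul_eq_mul]
    rw [hεa] at h; exact h.symm
  have hc2 : c 2 = 0 := by rw [← h20, mul_comm]; exact h02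
  have hc3 : c 3 = 0 := by rw [← h03, mul_comm]; exact h30
  by_cases h0 : c 0 = 0
  · -- then a = g; use act_compat to conclude
    have hc1 : c 1 = 1 := by rw [← hsum, h0, zero_add]
    have hag : a = g := by rw [ha, h0, hc1, hc2, hc3]; simp
    have h := act_compat g g g
    rw [hΔg] at h
    simp only [LinearMap.comp_apply, TensorProduct.map_tmul, LinearMap.mul'_apply,
      LinearMap.flip_apply, LinearMap.id_coe, id_eq] at h
    have hag' : (t g) g = g := hag
    rw [hag'] at h
    rw [hg2, h1g] at h
    exact h
  · have hc0 : c 0 = 1 := mul_left_cancel₀ h0 (by rw [h00, mul_one])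
    have hc1 : c 1 = 0 := by
      have := h01
      rw [hc0, one_mul] at this
      exact this
    rw [ha, hc0, hc1, hc2, hc3]
    simp
end

section
/- Let ▷ be a relaxed weak post-Hopf structure on Sweedler's 4-dimensional Hopf algebra H₄ with 1 ▷ g = 1. Then ▷ is completely determined: 1▷1 = 1, 1▷g = 1, 1▷ν = 0, 1▷gν = 0; g▷1 = 1, g▷g = 1, g▷ν = 0, g▷gν = 0; and x▷y = 0 whenever x ∈ {ν, gν} and y ∈ {1, g, ν, gν}. (This is structure (vi) of the classification.) -/
open TensorProduct Coalgebra

section Aux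
set_option linter.unusedSectionVars false

variable {k H : Type*} [Field k] [CharZero k] [Ring H] [HopfAlgebra k H] {g ν : H}

noncomputable def sweedlerBasis (hs : IsSweedlerHopf k g ν) : Module.Basis (Fin 4) k H :=
  Module.Basis.mk hs.basis_indep (by
    have h : Set.range ![(1 : H), g, ν, g * ν] = {(1 : H), g, ν, g * ν} := by
      ext x
      simp [Fin.exists_fin_two, Fin.exists_fin_succ]
      tauto
    rw [h, hs.basis_span])

theorem sweedlerBasis_apply (hs : IsSweedlerHopf k g ν) :
    sweedlerBasis hs 0 = 1 ∧ sweedlerBasis hs 1 = g ∧ sweedlerBasis hs 2 = ν ∧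
      sweedlerBasis hs 3 = g * ν := by
  refine ⟨?_, ?_, ?_, ?_⟩ <;> simp [sweedlerBasis]

theorem sweedlerBasis_repr (hs : IsSweedlerHopf k g ν) :
    (sweedlerBasis hs).repr (1 : H) = Finsupp.single 0 1 ∧
    (sweedlerBasis hs).repr g = Finsupp.single 1 1 ∧
    (sweedlerBasis hs).repr ν = Finsupp.single 2 1 ∧
    (sweedlerBasis hs).repr (g * ν) = Finsupp.single 3 1 := by
  obtain ⟨h0, h1, h2, h3⟩ := sweedlerBasis_apply hs
  refine ⟨?_, ?_, ?_, ?_⟩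
  · have h := (sweedlerBasis hs).repr_self 0; rwa [h0] at h
  · have h := (sweedlerBasis hs).repr_self 1; rwa [h1] at h
  · have h := (sweedlerBasis hs).repr_self 2; rwa [h2] at h
  · have h := (sweedlerBasis hs).repr_self 3; rwa [h3] at h

theorem sweedler_comul_gν (hs : IsSweedlerHopf k g ν) :
    comul (R := k) (g * ν) = (1 : H) ⊗ₜ[k] (g * ν) + (g * ν) ⊗ₜ[k] g := by
  rw [Bialgebra.comul_mul, hs.comul_g, hs.comul_ν, mul_add,
    Algebra.TensorProduct.tmul_mul_tmul, Algebra.TensorProduct.tmul_mul_tmul,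
    hs.g_sq, mul_one]

theorem sweedler_one_ne_g (hs : IsSweedlerHopf k g ν) : (1 : H) ≠ g := by
  intro h
  have h01 : (0 : Fin 4) = 1 := hs.basis_indep.injective (by simpa using h)
  simp at h01

theorem sweedler_prim_zero (hs : IsSweedlerHopf k g ν) {p : H}
    (hp : comul (R := k) p = (1 : H) ⊗ₜ[k] p + p ⊗ₜ[k] (1 : H)) : p = 0 := by
  set B := sweedlerBasis hs with hB
  obtain ⟨b0, b1, b2, b3⟩ := sweedlerBasis_apply hs
  obtain ⟨r0, r1, r2, r3⟩ := sweedlerBasis_repr hs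
  set a : Fin 4 → k := fun i => B.repr p i with ha
  have hsum : p = a 0 • 1 + a 1 • g + a 2 • ν + a 3 • (g * ν) := by
    have h := B.sum_repr p
    rw [Fin.sum_univ_four, b0, b1, b2, b3] at h
    exact h.symm
  have hcp : comul (R := k) p
      = a 0 • ((1 : H) ⊗ₜ[k] (1 : H)) + a 1 • (g ⊗ₜ[k] g)
        + a 2 • (g ⊗ₜ[k] ν + ν ⊗ₜ[k] (1 : H))
        + a 3 • ((1 : H) ⊗ₜ[k] (g * ν) + (g * ν) ⊗ₜ[k] g) := by
    conv_lhs => rw [hsum]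
    rw [map_add, map_add, map_add, map_smul, map_smul, map_smul, map_smul,
      hs.comul_g, hs.comul_ν, sweedler_comul_gν hs, Bialgebra.comul_one,
      Algebra.TensorProduct.one_def]
  have hp' := hcp.symm.trans hp
  have coeff : ∀ i j : Fin 4, ((B.tensorProduct B).repr
      (a 0 • ((1 : H) ⊗ₜ[k] (1 : H)) + a 1 • (g ⊗ₜ[k] g)
        + a 2 • (g ⊗ₜ[k] ν + ν ⊗ₜ[k] (1 : H))
        + a 3 • ((1 : H) ⊗ₜ[k] (g * ν) + (g * ν) ⊗ₜ[k] g))) (i, j)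
      = ((B.tensorProduct B).repr ((1 : H) ⊗ₜ[k] p + p ⊗ₜ[k] (1 : H))) (i, j) := by
    intro i j; rw [hp']
  have c00 := coeff 0 0
  have c11 := coeff 1 1
  have c12 := coeff 1 2
  have c31 := coeff 3 1
  simp only [map_add, map_smul, Finsupp.add_apply, Finsupp.smul_apply,
    Module.Basis.tensorProduct_repr_tmul_apply] at c00 c11 c12 c31
  rw [r0, r1, r2, r3] at c00 c11 c12 c31
  simp [Finsupp.single_apply, ← ha, smul_eq_mul] at c00 c11 c12 c31
  rw [hsum, c00, c11, c12, c31]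
  simp

theorem sweedler_grouplike (hs : IsSweedlerHopf k g ν) {e : H}
    (he : comul (R := k) e = e ⊗ₜ[k] e) (hε : counit (R := k) e = 1) :
    e = 1 ∨ e = g := by
  set B := sweedlerBasis hs with hB
  obtain ⟨b0, b1, b2, b3⟩ := sweedlerBasis_apply hs
  obtain ⟨r0, r1, r2, r3⟩ := sweedlerBasis_repr hs
  set a : Fin 4 → k := fun i => B.repr e i with ha
  have hsum : e = a 0 • 1 + a 1 • g + a 2 • ν + a 3 • (g * ν) := by
    have h := B.sum_repr e
    rw [Fin.sum_univ_four, b0, b1, b2, b3] at h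
    exact h.symm
  have hcp : comul (R := k) e
      = a 0 • ((1 : H) ⊗ₜ[k] (1 : H)) + a 1 • (g ⊗ₜ[k] g)
        + a 2 • (g ⊗ₜ[k] ν + ν ⊗ₜ[k] (1 : H))
        + a 3 • ((1 : H) ⊗ₜ[k] (g * ν) + (g * ν) ⊗ₜ[k] g) := by
    conv_lhs => rw [hsum]
    rw [map_add, map_add, map_add, map_smul, map_smul, map_smul, map_smul,
      hs.comul_g, hs.comul_ν, sweedler_comul_gν hs, Bialgebra.comul_one,
      Algebra.TensorProduct.one_def]
  have hp' := hcp.symm.trans he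
  have coeff : ∀ i j : Fin 4, ((B.tensorProduct B).repr
      (a 0 • ((1 : H) ⊗ₜ[k] (1 : H)) + a 1 • (g ⊗ₜ[k] g)
        + a 2 • (g ⊗ₜ[k] ν + ν ⊗ₜ[k] (1 : H))
        + a 3 • ((1 : H) ⊗ₜ[k] (g * ν) + (g * ν) ⊗ₜ[k] g))) (i, j)
      = ((B.tensorProduct B).repr (e ⊗ₜ[k] e)) (i, j) := by
    intro i j; rw [hp']
  have c00 := coeff 0 0
  have c11 := coeff 1 1
  have c01 := coeff 0 1
  have c22 := coeff 2 2
  have c33 := coeff 3 3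
  simp only [map_add, map_smul, Finsupp.add_apply, Finsupp.smul_apply,
    Module.Basis.tensorProduct_repr_tmul_apply] at c00 c11 c01 c22 c33
  rw [r0, r1, r2, r3] at c00 c11 c01 c22 c33
  simp [Finsupp.single_apply, ← ha, smul_eq_mul] at c00 c11 c01 c22 c33
  have hε' : a 0 + a 1 = 1 := by
    have h : counit (R := k) (a 0 • (1 : H) + a 1 • g + a 2 • ν + a 3 • (g * ν)) = 1 := by
      rw [← hsum]; exact hε
    rw [map_add, map_add, map_add, map_smul, map_smul, map_smul, map_smul,
      Bialgebra.counit_one, hs.counit_g, hs.counit_ν, Bialgebra.counit_mul,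
      hs.counit_g, hs.counit_ν] at h
    simpa using h
  by_cases h0 : a 0 = 0
  · right
    have ha1 : a 1 = 1 := by rw [h0] at hε'; simpa using hε'
    rw [hsum, h0, ha1, c22, c33]; simp
  · left
    have ha1 : a 1 = 0 := by
      rcases c01 with h | h
      · exact h
      · exact absurd h h0
    have ha0 : a 0 = 1 := by rw [ha1] at hε'; simpa using hε'
    rw [hsum, ha0, ha1, c22, c33]; simp

end Aux

/-- A relaxed weak post-Hopf structure on Sweedler's Hopf algebra with `1 ▷ g = 1` is
completely determined: it is structure (vi) of the classification. -/
theorem sweedler_structure_vi_of_one_g_eq_one {k H : Type*} [Field k] [CharZero k] [Ring H] [HopfAlgebra k H]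
    (g ν : H) (hs : IsSweedlerHopf k g ν)
    (t : H →ₗ[k] H →ₗ[k] H) (ht : IsRelaxedWeakPostHopf k t)
    (h1g : t 1 g = 1) :
    (t (1 : H) (1 : H) = (1 : H) ∧
      t (1 : H) g = (1 : H) ∧
      t (1 : H) ν = 0 ∧
      t (1 : H) (g * ν) = 0 ∧
      t g (1 : H) = (1 : H) ∧
      t g g = (1 : H) ∧
      t g ν = 0 ∧
      t g (g * ν) = 0) ∧
      (∀ x ∈ ({ν, (g * ν)} : Set H), ∀ y ∈ ({1, g, ν, (g * ν)} : Set H), t x y = 0) := by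
  have h11 : t 1 1 = 1 := by
    have h := ht.mul_compat 1 g g
    rw [hs.g_sq] at h
    simpa [Bialgebra.comul_one, Algebra.TensorProduct.one_def, LinearMap.mul'_apply,
      h1g] using h
  have h1ν : t 1 ν = 0 := by
    apply sweedler_prim_zero hs
    have h := ht.comul_hom 1 ν
    rw [Bialgebra.comul_one, hs.comul_ν, Algebra.TensorProduct.one_def] at h
    simpa [TensorProduct.tmul_add, TensorProduct.add_tmul,
      TensorProduct.tensorTensorTensorComm_tmul, TensorProduct.map_tmul,
      TensorProduct.lift.tmul, h1g, h11] using h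
  have h1gν : t 1 (g * ν) = 0 := by
    have h := ht.mul_compat 1 g ν
    simpa [Bialgebra.comul_one, Algebra.TensorProduct.one_def, LinearMap.mul'_apply,
      h1g, h1ν] using h
  have hg1 : t g 1 = 1 := by
    have hgrp : comul (R := k) (t g 1) = (t g 1) ⊗ₜ[k] (t g 1) := by
      have h := ht.comul_hom g 1
      rw [hs.comul_g, Bialgebra.comul_one, Algebra.TensorProduct.one_def] at h
      simpa [TensorProduct.tensorTensorTensorComm_tmul, TensorProduct.map_tmul,
        TensorProduct.lift.tmul] using h
    have hcnt : counit (R := k) (t g 1) = 1 := by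
      rw [ht.counit_hom, hs.counit_g, Bialgebra.counit_one, one_mul]
    have hsq : t g 1 = t g 1 * t g 1 := by
      have h := ht.mul_compat g 1 1
      rw [mul_one] at h
      simpa [hs.comul_g, LinearMap.mul'_apply] using h
    rcases sweedler_grouplike hs hgrp hcnt with h | h
    · exact h
    · exfalso
      rw [h, hs.g_sq] at hsq
      exact sweedler_one_ne_g hs hsq.symm
  have hgg : t g g = 1 := by
    have hgrp : comul (R := k) (t g g) = (t g g) ⊗ₜ[k] (t g g) := by
      have h := ht.comul_hom g g
      rw [hs.comul_g] at h
      simpa [TensorProduct.tensorTensorTensorComm_tmul, TensorProduct.map_tmul,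
        TensorProduct.lift.tmul] using h
    have hcnt : counit (R := k) (t g g) = 1 := by
      rw [ht.counit_hom, hs.counit_g, one_mul]
    rcases sweedler_grouplike hs hgrp hcnt with h | h
    · exact h
    · exfalso
      have h2 := ht.act_compat g g g
      rw [hs.comul_g] at h2
      simp only [LinearMap.comp_apply, TensorProduct.map_tmul, LinearMap.mul'_apply,
        LinearMap.flip_apply, LinearMap.id_apply] at h2
      rw [h] at h2
      rw [h, hs.g_sq, h1g] at h2
      exact sweedler_one_ne_g hs h2.symm
  have hgν : t g ν = 0 := by
    apply sweedler_prim_zero hs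
    have h := ht.comul_hom g ν
    rw [hs.comul_g, hs.comul_ν] at h
    simpa [TensorProduct.tmul_add, TensorProduct.tensorTensorTensorComm_tmul,
      TensorProduct.map_tmul, TensorProduct.lift.tmul, hgg, hg1] using h
  have hggν : t g (g * ν) = 0 := by
    have h := ht.mul_compat g g ν
    simpa [hs.comul_g, LinearMap.mul'_apply, hgg, hgν] using h
  have hν1 : t ν 1 = 0 := by
    apply sweedler_prim_zero hs
    have h := ht.comul_hom ν 1
    rw [hs.comul_ν, Bialgebra.comul_one, Algebra.TensorProduct.one_def] at h
    simpa [TensorProduct.add_tmul, TensorProduct.tensorTensorTensorComm_tmul,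
      TensorProduct.map_tmul, TensorProduct.lift.tmul, hg1, h11] using h
  have hνg : t ν g = 0 := by
    apply sweedler_prim_zero hs
    have h := ht.comul_hom ν g
    rw [hs.comul_ν, hs.comul_g] at h
    simpa [TensorProduct.add_tmul, TensorProduct.tensorTensorTensorComm_tmul,
      TensorProduct.map_tmul, TensorProduct.lift.tmul, hgg, h1g] using h
  have hνν : t ν ν = 0 := by
    apply sweedler_prim_zero hs
    have h := ht.comul_hom ν ν
    rw [hs.comul_ν] at h
    simpa [TensorProduct.add_tmul, TensorProduct.tmul_add,
      TensorProduct.tensorTensorTensorComm_tmul, TensorProduct.map_tmul,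
      TensorProduct.lift.tmul, hgg, h11, hν1, h1ν, hνg,
      TensorProduct.tmul_zero, TensorProduct.zero_tmul] using h
  have hνgν : t ν (g * ν) = 0 := by
    have h := ht.mul_compat ν g ν
    simpa [hs.comul_ν, LinearMap.mul'_apply, hgg, hνν, hνg, h1ν] using h
  have hgν1 : t (g * ν) 1 = 0 := by
    apply sweedler_prim_zero hs
    have h := ht.comul_hom (g * ν) 1
    rw [sweedler_comul_gν hs, Bialgebra.comul_one, Algebra.TensorProduct.one_def] at h
    simpa [TensorProduct.add_tmul, TensorProduct.tensorTensorTensorComm_tmul,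
      TensorProduct.map_tmul, TensorProduct.lift.tmul, h11, hg1] using h
  have hgνg : t (g * ν) g = 0 := by
    apply sweedler_prim_zero hs
    have h := ht.comul_hom (g * ν) g
    rw [sweedler_comul_gν hs, hs.comul_g] at h
    simpa [TensorProduct.add_tmul, TensorProduct.tensorTensorTensorComm_tmul,
      TensorProduct.map_tmul, TensorProduct.lift.tmul, h1g, hgg] using h
  have hgνν : t (g * ν) ν = 0 := by
    apply sweedler_prim_zero hs
    have h := ht.comul_hom (g * ν) ν
    rw [sweedler_comul_gν hs, hs.comul_ν] at h
    simpa [TensorProduct.add_tmul, TensorProduct.tmul_add,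
      TensorProduct.tensorTensorTensorComm_tmul, TensorProduct.map_tmul,
      TensorProduct.lift.tmul, h1g, h1ν, hgνg, hg1,
      TensorProduct.tmul_zero, TensorProduct.zero_tmul] using h
  have hgνgν : t (g * ν) (g * ν) = 0 := by
    have h := ht.mul_compat (g * ν) g ν
    simpa [sweedler_comul_gν hs, LinearMap.mul'_apply, h1g, hgνν, hgνg, hgν] using h
  refine ⟨⟨h11, h1g, h1ν, h1gν, hg1, hgg, hgν, hggν⟩, ?_⟩
  intro x hx y hy
  simp only [Set.mem_insert_iff, Set.mem_singleton_iff] at hx hy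
  rcases hx with rfl | rfl <;> rcases hy with rfl | rfl | rfl | rfl <;> assumption
end

section
/- Let ▷ be a relaxed weak post-Hopf structure on Sweedler's 4-dimensional Hopf algebra H₄ with 1 ▷ g = g. Then there exists a ∈ k with a² = a (so a = 0 or a = 1) such that 1 ▷ ν = a·ν. -/
open TensorProduct Coalgebra

/-- For a relaxed weak post-Hopf structure on Sweedler's Hopf algebra with `1 ▷ g = g`,
there is `a ∈ k` with `a² = a` (so `a = 0` or `a = 1`) such that `1 ▷ ν = a • ν`. -/
theorem sweedler_act_one_ν_of_one_g_eq_g {k H : Type*} [Field k] [CharZero k] [Ring H] [HopfAlgebra k H]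
    (g ν : H) (hs : IsSweedlerHopf k g ν)
    (t : H →ₗ[k] H →ₗ[k] H) (ht : IsRelaxedWeakPostHopf k t)
    (h1g : t 1 g = g) :
    ∃ a : k, a * a = a ∧ (a = 0 ∨ a = 1) ∧ t 1 ν = a • ν := by
  obtain ⟨hgg, hνν, hanti, hcg, hcν, hεg, hεν, -, -, hindep, hspan⟩ := hs
  -- basic multiplicative relations
  have hνg : ν * g = -(g * ν) := by rw [eq_neg_iff_add_eq_zero, add_comm]; exact hanti
  have hg_gν : g * (g * ν) = ν := by rw [← mul_assoc, hgg, one_mul]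
  have hgν_g : (g * ν) * g = -ν := by
    rw [mul_assoc, hνg, mul_neg, hg_gν]
  have hν_gν : ν * (g * ν) = 0 := by
    rw [← mul_assoc, hνg, neg_mul, mul_assoc, hνν, mul_zero, neg_zero]
  have hgν_ν : (g * ν) * ν = 0 := by rw [mul_assoc, hνν, mul_zero]
  have hgν_gν : (g * ν) * (g * ν) = 0 := by rw [mul_assoc, hν_gν, mul_zero]
  -- comul of 1
  have hc1 : comul (R := k) (1 : H) = (1:H) ⊗ₜ[k] (1:H) := by
    rw [Bialgebra.comul_one, Algebra.TensorProduct.one_def]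
  -- t 1 is multiplicative
  have hmul : ∀ y z : H, t 1 (y * z) = t 1 y * t 1 z := by
    intro y z
    have h := ht.mul_compat 1 y z
    simpa [hc1] using h
  -- t 1 1 = 1
  have he : t 1 1 = 1 := by
    have h : t 1 1 * g = g := by rw [← h1g, ← hmul, one_mul]
    have h2 := congrArg (· * g) h
    simp only [mul_assoc, hgg, mul_one] at h2
    exact h2
  -- basis
  have hrange : Set.range ![(1:H), g, ν, g*ν] = {1, g, ν, g*ν} := by
    simp only [Matrix.range_cons, Matrix.range_empty, Set.singleton_union, Set.union_empty]

  let b : Module.Basis (Fin 4) k H := Module.Basis.mk hindep (by rw [hrange, hspan])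
  have hb0 : b 0 = 1 := by simp [b, Module.Basis.mk_apply]
  have hb1 : b 1 = g := by simp [b, Module.Basis.mk_apply]
  have hb2 : b 2 = ν := by simp [b, Module.Basis.mk_apply]
  have hb3 : b 3 = g * ν := by simp [b, Module.Basis.mk_apply]
  set α := b.repr (t 1 ν) 0 with hα
  set β := b.repr (t 1 ν) 1 with hβ
  set a := b.repr (t 1 ν) 2 with ha
  set d := b.repr (t 1 ν) 3 with hd
  have hw : t 1 ν = α • (1:H) + β • g + a • ν + d • (g * ν) := by
    have := b.sum_repr (t 1 ν)
    rw [Fin.sum_univ_four, hb0, hb1, hb2, hb3] at this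
    rw [← this]
  -- Step A : (t 1 ν)^2 = 0 forces α = β = 0
  have hsq : t 1 ν * t 1 ν = 0 := by
    rw [← hmul, hνν, map_zero]
  rw [hw] at hsq
  have hexp : (α*α+β*β) • (1:H) + (2*(α*β)) • g + (2*(α*a)) • ν + (2*(α*d)) • (g*ν) = 0 := by
    rw [← hsq]
    simp only [add_mul, mul_add, smul_mul_assoc, mul_smul_comm, one_mul, mul_one,
      hgg, hνν, hνg, hg_gν, hgν_g, hν_gν, hgν_ν, hgν_gν, smul_smul, smul_zero, smul_neg]
    module
  have hz := Fintype.linearIndependent_iff.mp hindep ![α*α+β*β, 2*(α*β), 2*(α*a), 2*(α*d)]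
    (by rw [Fin.sum_univ_four]; simpa using hexp)
  have e0 : α * α + β * β = 0 := by
    have h := hz 0
    rwa [Matrix.cons_val_zero] at h
  have e1 : 2 * (α * β) = 0 := by
    have h := hz 1
    rwa [Matrix.cons_val_one, Matrix.cons_val_zero] at h
  have hαβ : α * β = 0 := by linear_combination e1 / 2
  have hα0 : α = 0 := by
    rcases mul_eq_zero.mp hαβ with h | h
    · exact h
    · rw [h, mul_zero, add_zero] at e0
      exact mul_self_eq_zero.mp e0
  have hβ0 : β = 0 := by
    rw [hα0, mul_zero, zero_add] at e0
    exact mul_self_eq_zero.mp e0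
  rw [hα0, hβ0, zero_smul, zero_smul, zero_add, zero_add] at hw
  -- Step B : comul equation forces d = 0
  have hcgν : comul (R := k) (g * ν) = (1:H) ⊗ₜ[k] (g*ν) + (g*ν) ⊗ₜ[k] g := by
    rw [Bialgebra.comul_mul, hcg, hcν, mul_add, Algebra.TensorProduct.tmul_mul_tmul,
      Algebra.TensorProduct.tmul_mul_tmul, hgg, mul_one]
  have hcomul := ht.comul_hom 1 ν
  rw [hc1, hcν] at hcomul
  simp only [tmul_add, map_add, tensorTensorTensorComm_tmul, map_tmul, lift.tmul,
    h1g, he] at hcomul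
  rw [hw, map_add, map_smul, map_smul, hcν, hcgν] at hcomul
  -- coordinate functional extracting the (1 ⊗ gν) coefficient
  have key : ∀ i j : Fin 4, b.coord i (b j) = if j = i then 1 else 0 := by
    intro i j; simp [Module.Basis.coord_apply, Finsupp.single_apply]
  have c0_1 : b.coord 0 (1:H) = 1 := by rw [← hb0]; simp [key]
  have c0_g : b.coord 0 g = 0 := by rw [← hb1]; simp [key]
  have c0_ν : b.coord 0 ν = 0 := by rw [← hb2]; simp [key]
  have c0_gν : b.coord 0 (g*ν) = 0 := by rw [← hb3]; simp [key]
  have c3_1 : b.coord 3 (1:H) = 0 := by rw [← hb0]; simp [key]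
  have c3_g : b.coord 3 g = 0 := by rw [← hb1]; simp [key]
  have c3_ν : b.coord 3 ν = 0 := by rw [← hb2]; simp [key]
  have c3_gν : b.coord 3 (g*ν) = 1 := by rw [← hb3]; simp [key]
  have hd0 : d = 0 := by
    have hφ := congrArg (LinearMap.mul' k k ∘ₗ TensorProduct.map (b.coord 0) (b.coord 3)) hcomul
    simp only [LinearMap.coe_comp, Function.comp_apply, map_add, map_smul, map_tmul,
      LinearMap.mul'_apply, smul_eq_mul, c0_1, c0_g, c0_ν, c0_gν, c3_1, c3_g, c3_ν, c3_gν,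
      hw] at hφ
    simpa using hφ
  rw [hd0, zero_smul, add_zero] at hw
  -- Step C : act_compat forces a * a = a
  have hact := ht.act_compat 1 1 ν
  rw [hc1] at hact
  simp only [LinearMap.coe_comp, Function.comp_apply, map_tmul, LinearMap.id_coe, id_eq,
    LinearMap.mul'_apply, LinearMap.flip_apply, he, one_mul] at hact
  rw [hw, map_smul, hw] at hact
  have hne : ν ≠ 0 := by rw [← hb2]; exact b.ne_zero 2
  have haa : a * a = a := by
    have h : (a * a - a) • ν = 0 := by
      rw [sub_smul, sub_eq_zero, mul_smul]
      exact hact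
    rcases smul_eq_zero.mp h with h | h
    · exact sub_eq_zero.mp h
    · exact absurd h hne
  refine ⟨a, haa, ?_, hw⟩
  rcases mul_eq_zero.mp (by linear_combination haa : a * (a - 1) = 0) with h | h
  · exact Or.inl h
  · exact Or.inr (by linear_combination h)
end

section
/- Let ▷ be a relaxed weak post-Hopf structure on Sweedler's 4-dimensional Hopf algebra H₄ with 1 ▷ g = g, 1 ▷ ν = 0, and g ▷ g = g. Then ▷ is completely determined: 1▷1 = 1, 1▷g = g, 1▷ν = 0, 1▷gν = 0; g▷1 = 1, g▷g = g, g▷ν = 0, g▷gν = 0; and x▷y = 0 whenever x ∈ {ν, gν} and y ∈ {1, g, ν, gν}. (This is structure (iv) of the classification.) -/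
open TensorProduct Coalgebra

set_option maxHeartbeats 1600000 in
/-- A relaxed weak post-Hopf structure on Sweedler's Hopf algebra with `1 ▷ g = g`,
`1 ▷ ν = 0` and `g ▷ g = g` is completely determined: it is structure (iv). -/
theorem sweedler_structure_iv {k H : Type*} [Field k] [CharZero k] [Ring H] [HopfAlgebra k H]
    (g ν : H) (hs : IsSweedlerHopf k g ν)
    (t : H →ₗ[k] H →ₗ[k] H) (ht : IsRelaxedWeakPostHopf k t)
    (h1g : t 1 g = g) (h1ν : t 1 ν = 0) (hgg : t g g = g) :
    (t (1 : H) (1 : H) = (1 : H) ∧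
      t (1 : H) g = g ∧
      t (1 : H) ν = 0 ∧
      t (1 : H) (g * ν) = 0 ∧
      t g (1 : H) = (1 : H) ∧
      t g g = g ∧
      t g ν = 0 ∧
      t g (g * ν) = 0) ∧
      (∀ x ∈ ({ν, (g * ν)} : Set H), ∀ y ∈ ({1, g, ν, (g * ν)} : Set H), t x y = 0) := by
  obtain ⟨hg2, hν2, hanti, hΔg, hΔν, hεg, hεν, -, -, hind, hspan⟩ := hs
  -- basis infrastructure
  have hrange : Set.range ![(1 : H), g, ν, g * ν] = {1, g, ν, g * ν} := by
    ext x
    simp [Matrix.range_cons, Matrix.range_empty]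
    tauto
  let b : Module.Basis (Fin 4) k H := Module.Basis.mk hind (by rw [hrange, hspan])
  have b0 : b 0 = 1 := by simp [b]
  have b1 : b 1 = g := by simp [b]
  have b2 : b 2 = ν := by simp [b]
  have b3 : b 3 = g * ν := by simp [b]
  have r1 : b.repr (1 : H) = Finsupp.single 0 1 := by rw [← b0]; exact b.repr_self 0
  have rg : b.repr g = Finsupp.single 1 1 := by rw [← b1]; exact b.repr_self 1
  have rν : b.repr ν = Finsupp.single 2 1 := by rw [← b2]; exact b.repr_self 2
  have rgν : b.repr (g * ν) = Finsupp.single 3 1 := by rw [← b3]; exact b.repr_self 3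
  have coords : ∀ a c d e : k, a • (1:H) + c • g + d • ν + e • (g*ν) = 0 →
      a = 0 ∧ c = 0 ∧ d = 0 ∧ e = 0 := by
    intro a c d e h
    have h4 := Fintype.linearIndependent_iff.mp hind ![a, c, d, e]
      (by simpa [Fin.sum_univ_four] using h)
    exact ⟨h4 0, h4 1, h4 2, h4 3⟩
  have hrep : ∀ x : H, ∃ a c d e : k, x = a • (1:H) + c • g + d • ν + e • (g*ν) := by
    intro x
    refine ⟨b.repr x 0, b.repr x 1, b.repr x 2, b.repr x 3, ?_⟩
    have hx := b.sum_repr x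
    rw [Fin.sum_univ_four, b0, b1, b2, b3] at hx
    exact hx.symm
  -- comultiplication values
  have hΔ1 : comul (R := k) (1 : H) = (1:H) ⊗ₜ[k] 1 := by
    rw [Bialgebra.comul_one]; rfl
  have hΔgν : comul (R := k) (g * ν) = (1:H) ⊗ₜ[k] (g*ν) + (g*ν) ⊗ₜ[k] g := by
    rw [Bialgebra.comul_mul, hΔg, hΔν, mul_add]
    rw [Algebra.TensorProduct.tmul_mul_tmul, Algebra.TensorProduct.tmul_mul_tmul, hg2, mul_one]
  -- algebra facts
  have hνg : ν * g = -(g * ν) := eq_neg_of_add_eq_zero_left (by rwa [add_comm] at hanti)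
  -- specialized compatibilities
  have mc1 : ∀ y z : H, t 1 (y * z) = t 1 y * t 1 z := by
    intro y z
    rw [ht.mul_compat 1 y z, hΔ1]
    simp [LinearMap.mul'_apply]
  have mcg : ∀ y z : H, t g (y * z) = t g y * t g z := by
    intro y z
    rw [ht.mul_compat g y z, hΔg]
    simp [LinearMap.mul'_apply]
  have mcν : ∀ y z : H, t ν (y * z) = t g y * t ν z + t ν y * t 1 z := by
    intro y z
    rw [ht.mul_compat ν y z, hΔν]
    simp [LinearMap.mul'_apply]
  have ac1 : ∀ y z : H, t 1 (t y z) = t (t 1 y) z := by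
    intro y z
    rw [ht.act_compat 1 y z, hΔ1]
    simp [LinearMap.mul'_apply]
  have acg : ∀ y z : H, t g (t y z) = t (g * t g y) z := by
    intro y z
    rw [ht.act_compat g y z, hΔg]
    simp [LinearMap.mul'_apply]
  have acν : ∀ y z : H, t ν (t y z) = t (g * t ν y) z + t (ν * t 1 y) z := by
    intro y z
    rw [ht.act_compat ν y z, hΔν]
    simp [LinearMap.mul'_apply]
  -- step 1 : 1 ▷ 1 = 1
  have h11 : t 1 (1 : H) = 1 := by
    have h := mc1 1 g
    rw [one_mul, h1g] at h
    calc t 1 (1:H) = t 1 1 * (g * g) := by rw [hg2, mul_one]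
    _ = (t 1 1 * g) * g := by rw [mul_assoc]
    _ = g * g := by rw [← h]
    _ = 1 := hg2
  -- step 2 : 1 ▷ gν = 0
  have h1gν : t 1 (g * ν) = 0 := by rw [mc1 g ν, h1ν, mul_zero]
  -- step 3 : g ▷ 1 = 1
  have hg1 : t g (1 : H) = 1 := by
    have h := mcg g g
    rw [hg2, hgg] at h
    rw [h, hg2]
  -- step 4 : ν ▷ 1 = 0
  have hν1 : t ν (1 : H) = 0 := by
    have h := mcν 1 1
    rw [one_mul, hg1, h11, one_mul, mul_one] at h
    have h2 : t ν (1:H) + 0 = t ν 1 + t ν 1 := by rw [add_zero]; exact h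
    exact (add_left_cancel h2).symm
  -- step 5 : ν ▷ g = 0
  have hνg0 : t ν g = 0 := by
    obtain ⟨a, c, d, e, hu⟩ := hrep (t ν g)
    have hC := ht.comul_hom ν g
    rw [hΔν, hΔg] at hC
    simp only [add_tmul, map_add, tensorTensorTensorComm_tmul, TensorProduct.map_tmul,
      lift.tmul] at hC
    rw [hgg, h1g, hu] at hC
    simp only [map_add, map_smul, hΔ1, hΔg, hΔν, hΔgν] at hC
    have h00 := congrArg (fun zz => (b.tensorProduct b).repr zz (0, 0)) hC
    have h11' := congrArg (fun zz => (b.tensorProduct b).repr zz (1, 1)) hC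
    have h20 := congrArg (fun zz => (b.tensorProduct b).repr zz (2, 0)) hC
    have h03 := congrArg (fun zz => (b.tensorProduct b).repr zz (0, 3)) hC
    simp only [map_add, map_smul, Finsupp.add_apply, Finsupp.smul_apply, tmul_add, tmul_smul,
      smul_tmul, add_tmul, Module.Basis.tensorProduct_repr_tmul_apply, r1, rg, rν, rgν,
      Finsupp.single_apply] at h00 h11' h20 h03
    simp at h00 h11' h20 h03
    rw [hu, h00, h11', h20, h03]
    simp
  -- step 6 : g ▷ ν = 0
  have hgν0 : t g ν = 0 := by
    obtain ⟨a, c, d, e, hw⟩ := hrep (t g ν)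
    have hC := ht.comul_hom g ν
    rw [hΔg, hΔν] at hC
    simp only [tmul_add, map_add, tensorTensorTensorComm_tmul, TensorProduct.map_tmul,
      lift.tmul] at hC
    rw [hgg, hg1, hw] at hC
    simp only [map_add, map_smul, hΔ1, hΔg, hΔν, hΔgν] at hC
    have h03 := congrArg (fun zz => (b.tensorProduct b).repr zz (0, 3)) hC
    simp only [map_add, map_smul, Finsupp.add_apply, Finsupp.smul_apply, tmul_add, tmul_smul,
      smul_tmul, add_tmul, Module.Basis.tensorProduct_repr_tmul_apply, r1, rg, rν, rgν,
      Finsupp.single_apply] at h03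
    simp at h03
    -- h03 : e = 0
    have hgw : t g (t g ν) = 0 := by rw [acg g ν, hgg, hg2, h1ν]
    rw [hw] at hgw
    simp only [map_add, map_smul, hg1, hgg, hw, h03, zero_smul, add_zero] at hgw
    have ea := congrArg (fun x => b.repr x 0) hgw
    have ec := congrArg (fun x => b.repr x 1) hgw
    have ed := congrArg (fun x => b.repr x 2) hgw
    simp [r1, rg, rν, rgν, Finsupp.single_apply] at ea ec ed
    rw [ed, zero_mul, add_zero] at ea ec
    rw [hw, h03, ea, ec, ed]
    simp
  -- step 7 : g ▷ gν = 0
  have hggν : t g (g * ν) = 0 := by rw [mcg g ν, hgν0, mul_zero]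
  -- step 8 : gν ▷ z = 0
  have hgνz : ∀ z : H, t (g * ν) z = - t ν (t g z) := by
    intro z
    have h := acν g z
    rw [hνg0, mul_zero, h1g, hνg] at h
    simp only [map_zero, LinearMap.zero_apply, zero_add, map_neg, LinearMap.neg_apply] at h
    rw [h, neg_neg]
  have hgν1 : t (g * ν) (1:H) = 0 := by rw [hgνz 1, hg1, hν1, neg_zero]
  have hgνg : t (g * ν) g = 0 := by rw [hgνz g, hgg, hνg0, neg_zero]
  have hgνν : t (g * ν) ν = 0 := by rw [hgνz ν, hgν0, map_zero, neg_zero]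
  have hgνgν : t (g * ν) (g * ν) = 0 := by rw [hgνz (g*ν), hggν, map_zero, neg_zero]
  -- step 9 : ν ▷ ν = 0
  have hνν : t ν ν = 0 := by
    obtain ⟨a, c, d, e, hv⟩ := hrep (t ν ν)
    have hC := ht.comul_hom ν ν
    rw [hΔν] at hC
    simp only [tmul_add, add_tmul, map_add, tensorTensorTensorComm_tmul, TensorProduct.map_tmul,
      lift.tmul] at hC
    rw [hgg, h11, hν1, h1ν] at hC
    simp only [tmul_zero, zero_tmul, add_zero, zero_add] at hC
    rw [hv] at hC
    simp only [map_add, map_smul, hΔ1, hΔg, hΔν, hΔgν] at hC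
    have h03 := congrArg (fun zz => (b.tensorProduct b).repr zz (0, 3)) hC
    simp only [map_add, map_smul, Finsupp.add_apply, Finsupp.smul_apply, tmul_add, tmul_smul,
      smul_tmul, add_tmul, Module.Basis.tensorProduct_repr_tmul_apply, r1, rg, rν, rgν,
      Finsupp.single_apply] at h03
    simp at h03
    -- h03 : e = 0
    have h1v : t 1 (t ν ν) = 0 := by rw [ac1 ν ν, h1ν, map_zero, LinearMap.zero_apply]
    rw [hv, h03] at h1v
    simp only [zero_smul, add_zero, map_add, map_smul, h11, h1g, h1ν, smul_zero] at h1v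
    have h0 : a • (1:H) + c • g + (0:k) • ν + (0:k) • (g*ν) = 0 := by
      rw [← h1v]; module
    obtain ⟨ha, hc, -, -⟩ := coords _ _ _ _ h0
    have hνv : t ν (t ν ν) = t (g * t ν ν) ν := by
      have h := acν ν ν
      rw [h1ν, mul_zero] at h
      simpa using h
    rw [hv, h03, ha, hc] at hνv
    simp only [zero_smul, zero_add, add_zero, map_smul, mul_smul_comm, LinearMap.smul_apply,
      hgνν, smul_zero] at hνv
    -- hνv : d • t ν (d • ν) = 0  →  (d*d) • ν = 0
    rw [hv, h03, ha, hc] at hνv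
    simp only [zero_smul, zero_add, add_zero] at hνv
    have h0' : (0:k) • (1:H) + (0:k) • g + (d*d) • ν + (0:k) • (g*ν) = 0 := by
      rw [← hνv]; module
    obtain ⟨-, -, hd, -⟩ := coords _ _ _ _ h0'
    have hd0 : d = 0 := mul_self_eq_zero.mp hd
    rw [hv, h03, ha, hc, hd0]
    simp
  -- step 10 : ν ▷ gν = 0
  have hνgν : t ν (g * ν) = 0 := by rw [mcν g ν, hνν, hνg0, mul_zero, zero_mul, add_zero]
  refine ⟨⟨h11, h1g, h1ν, h1gν, hg1, hgg, hgν0, hggν⟩, ?_⟩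
  intro x hx y hy
  simp only [Set.mem_insert_iff, Set.mem_singleton_iff] at hx hy
  rcases hx with rfl | rfl <;> rcases hy with rfl | rfl | rfl | rfl <;> assumption
end

section
/- Let ▷ be a relaxed weak post-Hopf structure on Sweedler's 4-dimensional Hopf algebra H₄ with 1 ▷ g = g and 1 ▷ ν = ν. Then 1 ▷ x = x for all x ∈ H₄ (so ▷ is a weak post-Hopf structure), and ▷ is given by one of the three families: (i) g▷1 = 1, g▷g = g, g▷ν = -ν, g▷gν = -gν, ν▷1 = 0, ν▷g = 0, ν▷ν = aν, ν▷gν = a·gν, gν▷1 = 0, gν▷g = 0, gν▷ν = aν, gν▷gν = a·gν for some a ∈ k; or (ii) g▷1 = 1, g▷g = 1, g▷ν = 0, g▷gν = 0, ν▷1 = 0, ν▷g = a - a·g, ν▷ν = -aν, ν▷gν = -a·gν, gν▷1 = 0, gν▷g = a - a·g, gν▷ν = -aν, gν▷gν = -a·gν for some a ∈ k; or (iii) g▷x = 1▷x = x for x ∈ {1, g, ν, gν} and ν▷x = gν▷x = 0 for all x ∈ {1, g, ν, gν}. -/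
open TensorProduct Coalgebra

section Aux
variable {k H : Type*} [Field k] [Ring H] [HopfAlgebra k H] {g ν : H}

lemma exists_coords (hs : IsSweedlerHopf k g ν) :
    ∃ φ : Fin 4 → (H →ₗ[k] k), ∀ i j : Fin 4,
      φ i (![(1 : H), g, ν, g * ν] j) = if i = j then 1 else 0 := by
  have hspan : ⊤ ≤ Submodule.span k (Set.range ![(1 : H), g, ν, g * ν]) := by
    rw [show Set.range ![(1 : H), g, ν, g * ν] = {(1 : H), g, ν, g * ν} by
      ext x
      simp only [Set.mem_range, Set.mem_insert_iff, Set.mem_singleton_iff]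
      constructor
      · rintro ⟨j, rfl⟩; fin_cases j <;> simp
      · rintro (rfl|rfl|rfl|rfl)
        exacts [⟨0, rfl⟩, ⟨1, rfl⟩, ⟨2, rfl⟩, ⟨3, rfl⟩]]
    rw [hs.basis_span]
  let B : Module.Basis (Fin 4) k H := Module.Basis.mk hs.basis_indep hspan
  refine ⟨fun i => B.coord i, fun i j => ?_⟩
  have h : ![(1 : H), g, ν, g * ν] j = B j := (Module.Basis.mk_apply _ _ _).symm
  rw [h, Module.Basis.coord_apply, Module.Basis.repr_self, Finsupp.single_apply]
  simp [eq_comm]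

lemma exists_repr (hs : IsSweedlerHopf k g ν) (u : H) :
    ∃ a b c d : k, u = a • (1:H) + b • g + c • ν + d • (g*ν) := by
  have hspan : ⊤ ≤ Submodule.span k (Set.range ![(1 : H), g, ν, g * ν]) := by
    rw [show Set.range ![(1 : H), g, ν, g * ν] = {(1 : H), g, ν, g * ν} by
      ext x
      simp only [Set.mem_range, Set.mem_insert_iff, Set.mem_singleton_iff]
      constructor
      · rintro ⟨j, rfl⟩; fin_cases j <;> simp
      · rintro (rfl|rfl|rfl|rfl)
        exacts [⟨0, rfl⟩, ⟨1, rfl⟩, ⟨2, rfl⟩, ⟨3, rfl⟩]]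
    rw [hs.basis_span]
  let B : Module.Basis (Fin 4) k H := Module.Basis.mk hs.basis_indep hspan
  refine ⟨B.repr u 0, B.repr u 1, B.repr u 2, B.repr u 3, ?_⟩
  have h := B.sum_repr u
  rw [Fin.sum_univ_four] at h
  have hB : ∀ j : Fin 4, B j = ![(1 : H), g, ν, g * ν] j := fun j => Module.Basis.mk_apply _ _ _
  rw [hB 0, hB 1, hB 2, hB 3] at h
  simpa using h.symm
end Aux
set_option maxHeartbeats 8000000 in
/-- A relaxed weak post-Hopf structure on Sweedler's Hopf algebra with `1 ▷ g = g` and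
`1 ▷ ν = ν` satisfies `1 ▷ x = x` for all `x` (so it is a weak post-Hopf structure), and is
given by one of the three families (i), (ii), (iii) of the classification. -/
theorem sweedler_unital_classification {k H : Type*} [Field k] [CharZero k] [Ring H] [HopfAlgebra k H]
    (g ν : H) (hs : IsSweedlerHopf k g ν)
    (t : H →ₗ[k] H →ₗ[k] H) (ht : IsRelaxedWeakPostHopf k t)
    (h1g : t 1 g = g) (h1ν : t 1 ν = ν) :
    (∀ x : H, t 1 x = x) ∧
      ((∃ a : k,
        t g (1 : H) = (1 : H) ∧
        t g g = g ∧
        t g ν = -ν ∧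
        t g (g * ν) = -(g * ν) ∧
        t ν (1 : H) = 0 ∧
        t ν g = 0 ∧
        t ν ν = a • ν ∧
        t ν (g * ν) = a • (g * ν) ∧
        t (g * ν) (1 : H) = 0 ∧
        t (g * ν) g = 0 ∧
        t (g * ν) ν = a • ν ∧
        t (g * ν) (g * ν) = a • (g * ν)) ∨
       (∃ a : k,
        t g (1 : H) = (1 : H) ∧
        t g g = (1 : H) ∧
        t g ν = 0 ∧
        t g (g * ν) = 0 ∧
        t ν (1 : H) = 0 ∧
        t ν g = a • ((1 : H) - g) ∧
        t ν ν = -(a • ν) ∧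
        t ν (g * ν) = -(a • (g * ν)) ∧
        t (g * ν) (1 : H) = 0 ∧
        t (g * ν) g = a • ((1 : H) - g) ∧
        t (g * ν) ν = -(a • ν) ∧
        t (g * ν) (g * ν) = -(a • (g * ν))) ∨
       (t g (1 : H) = (1 : H) ∧
        t g g = g ∧
        t g ν = ν ∧
        t g (g * ν) = (g * ν) ∧
        t ν (1 : H) = 0 ∧
        t ν g = 0 ∧
        t ν ν = 0 ∧
        t ν (g * ν) = 0 ∧
        t (g * ν) (1 : H) = 0 ∧
        t (g * ν) g = 0 ∧
        t (g * ν) ν = 0 ∧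
        t (g * ν) (g * ν) = 0)) := by
    classical
  -- coordinate functionals
  obtain ⟨φ, hφ⟩ := exists_coords hs
  have F00 : φ 0 (1:H) = 1 := by simpa using hφ 0 0
  have F01 : φ 0 g = 0 := by simpa using hφ 0 1
  have F02 : φ 0 ν = 0 := by simpa using hφ 0 2
  have F03 : φ 0 (g*ν) = 0 := by simpa using hφ 0 3
  have F10 : φ 1 (1:H) = 0 := by simpa using hφ 1 0
  have F11 : φ 1 g = 1 := by simpa using hφ 1 1
  have F12 : φ 1 ν = 0 := by simpa using hφ 1 2
  have F13 : φ 1 (g*ν) = 0 := by simpa using hφ 1 3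
  have F20 : φ 2 (1:H) = 0 := by simpa using hφ 2 0
  have F21 : φ 2 g = 0 := by simpa using hφ 2 1
  have F22 : φ 2 ν = 1 := by simpa using hφ 2 2
  have F23 : φ 2 (g*ν) = 0 := by simpa using hφ 2 3
  have F30 : φ 3 (1:H) = 0 := by simpa using hφ 3 0
  have F31 : φ 3 g = 0 := by simpa using hφ 3 1
  have F32 : φ 3 ν = 0 := by simpa using hφ 3 2
  have F33 : φ 3 (g*ν) = 1 := by simpa using hφ 3 3
  -- pairing on the tensor square
  obtain ⟨Ψ, hΨ⟩ : ∃ Ψ : Fin 4 → Fin 4 → (H ⊗[k] H →ₗ[k] k),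
      ∀ i j (x y : H), Ψ i j (x ⊗ₜ[k] y) = φ i x * φ j y :=
    ⟨fun i j => TensorProduct.lift ((LinearMap.mul k k ∘ₗ φ i).compl₂ (φ j)),
      fun i j x y => by simp⟩
  -- multiplication table
  have hνg : ν * g = -(g * ν) := by
    rw [eq_neg_iff_add_eq_zero, add_comm]; exact hs.anticomm
  have hgw : g * (g*ν) = ν := by rw [← mul_assoc, hs.g_sq, one_mul]
  have hwg : (g*ν)*g = -ν := by rw [mul_assoc, hνg, mul_neg, hgw]
  have hνw : ν*(g*ν) = 0 := by
    rw [← mul_assoc, hνg, neg_mul, mul_assoc, hs.ν_sq, mul_zero, neg_zero]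
  have hwν : (g*ν)*ν = 0 := by rw [mul_assoc, hs.ν_sq, mul_zero]
  have hww : (g*ν)*(g*ν) = 0 := by rw [mul_assoc, hνw, mul_zero]
  -- coalgebra values
  have Hcm1 : comul (R:=k) (1:H) = (1:H) ⊗ₜ[k] (1:H) := by
    rw [Bialgebra.comul_one, Algebra.TensorProduct.one_def]
  have Hcmw : comul (R:=k) (g*ν) = (1:H) ⊗ₜ[k] (g*ν) + (g*ν) ⊗ₜ[k] g := by
    rw [Bialgebra.comul_mul, hs.comul_g, hs.comul_ν, mul_add,
      Algebra.TensorProduct.tmul_mul_tmul, Algebra.TensorProduct.tmul_mul_tmul,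
      hs.g_sq, mul_one]
  have Hct1 : counit (R:=k) (1:H) = 1 := Bialgebra.counit_one
  have Hctw : counit (R:=k) (g*ν) = 0 := by rw [Bialgebra.counit_mul, hs.counit_ν, mul_zero]
  -- specializations of mul_compat
  have mul1 : ∀ y z : H, t 1 (y*z) = t 1 y * t 1 z := by
    intro y z; rw [ht.mul_compat, Hcm1]; simp [LinearMap.mul'_apply]
  have mulg : ∀ y z : H, t g (y*z) = t g y * t g z := by
    intro y z; rw [ht.mul_compat, hs.comul_g]; simp [LinearMap.mul'_apply]
  have mulν : ∀ y z : H, t ν (y*z) = t g y * t ν z + t ν y * t 1 z := by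
    intro y z; rw [ht.mul_compat, hs.comul_ν]; simp [LinearMap.mul'_apply]
  have mulw : ∀ y z : H, t (g*ν) (y*z) = t 1 y * t (g*ν) z + t (g*ν) y * t g z := by
    intro y z; rw [ht.mul_compat, Hcmw]; simp [LinearMap.mul'_apply]
  -- specializations of act_compat
  have actg : ∀ y z : H, t g (t y z) = t (g * t g y) z := by
    intro y z; rw [ht.act_compat, hs.comul_g]; simp [LinearMap.mul'_apply]
  have actν : ∀ y z : H, t ν (t y z) = t (g * t ν y) z + t (ν * t 1 y) z := by
    intro y z; rw [ht.act_compat, hs.comul_ν]; simp [LinearMap.mul'_apply]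
  -- `1 ▷ x = x`
  have h11 : t 1 (1:H) = 1 := by
    have h := mul1 1 g
    rw [one_mul, h1g] at h
    calc t 1 (1:H) = t 1 1 * (g*g) := by rw [hs.g_sq, mul_one]
      _ = (t 1 1 * g) * g := by rw [mul_assoc]
      _ = g * g := by rw [← h]
      _ = 1 := hs.g_sq
  have h1w : t 1 (g*ν) = g*ν := by rw [mul1, h1g, h1ν]
  have hone : ∀ x : H, t 1 x = x := by
    have hsp : ∀ x ∈ Submodule.span k {(1:H), g, ν, g*ν}, t 1 x = x := by
      intro x hx
      induction hx using Submodule.span_induction with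
      | mem y hy =>
        simp only [Set.mem_insert_iff, Set.mem_singleton_iff] at hy
        rcases hy with rfl|rfl|rfl|rfl
        exacts [h11, h1g, h1ν, h1w]
      | zero => exact map_zero _
      | add x y _ _ hx hy => rw [map_add, hx, hy]
      | smul a x _ hx => rw [map_smul, hx]
    intro x; exact hsp x (by rw [hs.basis_span]; trivial)
  
  -- rewrite the `t 1` occurrences away
  simp only [hone] at mulν actν
  -- g ▷ 1 = 1
  have G1 : t g (1:H) = 1 := by
    obtain ⟨a, b, c, d, hu⟩ := exists_repr hs (t g (1:H))
    have hgr : comul (R:=k) (t g (1:H)) = (t g 1) ⊗ₜ[k] (t g 1) := by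
      rw [ht.comul_hom, hs.comul_g, Hcm1]
      simp
    have hct : counit (R:=k) (t g (1:H)) = 1 := by
      rw [ht.counit_hom, hs.counit_g, Hct1, mul_one]
    have hsq : t g (1:H) = t g 1 * t g 1 := by
      have h := mulg 1 1; rwa [mul_one] at h
    rw [hu] at hgr hct hsq
    simp only [map_add, map_smul, hs.counit_g, hs.counit_ν, Hct1, Hctw, smul_eq_mul,
      mul_one, mul_zero, add_zero] at hct
    have E11 := LinearMap.congr_arg (f := Ψ 1 1) hgr
    simp only [map_add, map_smul, map_neg, map_zero, Hcm1, hs.comul_g, hs.comul_ν, Hcmw, hΨ,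
      F00, F01, F02, F03, F10, F11, F12, F13, F20, F21, F22, F23, F30, F31, F32, F33, smul_eq_mul, mul_one, one_mul, mul_zero, zero_mul, add_zero, zero_add,
      neg_zero, mul_neg, neg_mul, neg_neg] at E11
    have E01 := LinearMap.congr_arg (f := Ψ 0 1) hgr
    simp only [map_add, map_smul, map_neg, map_zero, Hcm1, hs.comul_g, hs.comul_ν, Hcmw, hΨ,
      F00, F01, F02, F03, F10, F11, F12, F13, F20, F21, F22, F23, F30, F31, F32, F33, smul_eq_mul, mul_one, one_mul, mul_zero, zero_mul, add_zero, zero_add,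
      neg_zero, mul_neg, neg_mul, neg_neg] at E01
    have E22 := LinearMap.congr_arg (f := Ψ 2 2) hgr
    simp only [map_add, map_smul, map_neg, map_zero, Hcm1, hs.comul_g, hs.comul_ν, Hcmw, hΨ,
      F00, F01, F02, F03, F10, F11, F12, F13, F20, F21, F22, F23, F30, F31, F32, F33, smul_eq_mul, mul_one, one_mul, mul_zero, zero_mul, add_zero, zero_add,
      neg_zero, mul_neg, neg_mul, neg_neg] at E22
    have E33 := LinearMap.congr_arg (f := Ψ 3 3) hgr
    simp only [map_add, map_smul, map_neg, map_zero, Hcm1, hs.comul_g, hs.comul_ν, Hcmw, hΨ,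
      F00, F01, F02, F03, F10, F11, F12, F13, F20, F21, F22, F23, F30, F31, F32, F33, smul_eq_mul, mul_one, one_mul, mul_zero, zero_mul, add_zero, zero_add,
      neg_zero, mul_neg, neg_mul, neg_neg] at E33
    simp only [mul_add, add_mul, smul_mul_assoc, mul_smul_comm, smul_smul, one_mul,
      mul_one, hs.g_sq, hs.ν_sq, hνg, hgw, hwg, hνw, hwν, hww, mul_neg, neg_mul,
      smul_neg, mul_zero, zero_mul, smul_zero, add_zero, zero_add, neg_zero,
      neg_neg] at hsq
    have P0 := LinearMap.congr_arg (f := φ 0) hsq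
    simp only [map_add, map_smul, map_neg, map_zero,
      F00, F01, F02, F03, F10, F11, F12, F13, F20, F21, F22, F23, F30, F31, F32, F33, smul_eq_mul, mul_one, one_mul, mul_zero, zero_mul, add_zero, zero_add,
      neg_zero, mul_neg, neg_mul, neg_neg] at P0
    have hc : c = 0 := mul_self_eq_zero.mp E22.symm
    have hd : d = 0 := mul_self_eq_zero.mp E33.symm
    have hb2 : b * (b - 1) = 0 := by linear_combination -E11
    rcases mul_eq_zero.mp hb2 with hb | hb
    · have ha : a = 1 := by linear_combination hct - hb
      rw [hu, ha, hb, hc, hd]; simp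
    · exfalso
      have hb1 : b = 1 := by linear_combination hb
      have ha : a = 0 := by linear_combination -E01 - a*hb
      rw [ha, hb1] at P0
      norm_num at P0
  -- g ▷ g ∈ {1, g}
  have hGG : t g g = 1 ∨ t g g = g := by
    obtain ⟨a, b, c, d, hu⟩ := exists_repr hs (t g g)
    have hgr : comul (R:=k) (t g g) = (t g g) ⊗ₜ[k] (t g g) := by
      rw [ht.comul_hom, hs.comul_g]; simp
    have hct : counit (R:=k) (t g g) = 1 := by
      rw [ht.counit_hom, hs.counit_g, mul_one]
    rw [hu] at hgr hct
    simp only [map_add, map_smul, hs.counit_g, hs.counit_ν, Hct1, Hctw, smul_eq_mul,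
      mul_one, mul_zero, add_zero] at hct
    have E11 := LinearMap.congr_arg (f := Ψ 1 1) hgr
    simp only [map_add, map_smul, map_neg, map_zero, Hcm1, hs.comul_g, hs.comul_ν, Hcmw, hΨ,
      F00, F01, F02, F03, F10, F11, F12, F13, F20, F21, F22, F23, F30, F31, F32, F33, smul_eq_mul, mul_one, one_mul, mul_zero, zero_mul, add_zero, zero_add,
      neg_zero, mul_neg, neg_mul, neg_neg] at E11
    have E22 := LinearMap.congr_arg (f := Ψ 2 2) hgr
    simp only [map_add, map_smul, map_neg, map_zero, Hcm1, hs.comul_g, hs.comul_ν, Hcmw, hΨ,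
      F00, F01, F02, F03, F10, F11, F12, F13, F20, F21, F22, F23, F30, F31, F32, F33, smul_eq_mul, mul_one, one_mul, mul_zero, zero_mul, add_zero, zero_add,
      neg_zero, mul_neg, neg_mul, neg_neg] at E22
    have E33 := LinearMap.congr_arg (f := Ψ 3 3) hgr
    simp only [map_add, map_smul, map_neg, map_zero, Hcm1, hs.comul_g, hs.comul_ν, Hcmw, hΨ,
      F00, F01, F02, F03, F10, F11, F12, F13, F20, F21, F22, F23, F30, F31, F32, F33, smul_eq_mul, mul_one, one_mul, mul_zero, zero_mul, add_zero, zero_add,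
      neg_zero, mul_neg, neg_mul, neg_neg] at E33
    have hc : c = 0 := mul_self_eq_zero.mp E22.symm
    have hd : d = 0 := mul_self_eq_zero.mp E33.symm
    have hb2 : b * (b - 1) = 0 := by linear_combination -E11
    rcases mul_eq_zero.mp hb2 with hb | hb
    · left
      have ha : a = 1 := by linear_combination hct - hb
      rw [hu, ha, hb, hc, hd]; simp
    · right
      have hb1 : b = 1 := by linear_combination hb
      have ha : a = 0 := by linear_combination hct - hb
      rw [hu, ha, hb1, hc, hd]; simp
  -- primitives are zero
  have prim0 : ∀ p : H, comul (R:=k) p = (1:H) ⊗ₜ[k] p + p ⊗ₜ[k] (1:H) → p = 0 := by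
    intro p hp
    obtain ⟨a, b, c, d, hu⟩ := exists_repr hs p
    rw [hu] at hp
    have E00 := LinearMap.congr_arg (f := Ψ 0 0) hp
    simp only [map_add, map_smul, map_neg, map_zero, Hcm1, hs.comul_g, hs.comul_ν, Hcmw, hΨ,
      F00, F01, F02, F03, F10, F11, F12, F13, F20, F21, F22, F23, F30, F31, F32, F33, smul_eq_mul, mul_one, one_mul, mul_zero, zero_mul, add_zero, zero_add,
      neg_zero, mul_neg, neg_mul, neg_neg] at E00
    have E11 := LinearMap.congr_arg (f := Ψ 1 1) hp
    simp only [map_add, map_smul, map_neg, map_zero, Hcm1, hs.comul_g, hs.comul_ν, Hcmw, hΨ,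
      F00, F01, F02, F03, F10, F11, F12, F13, F20, F21, F22, F23, F30, F31, F32, F33, smul_eq_mul, mul_one, one_mul, mul_zero, zero_mul, add_zero, zero_add,
      neg_zero, mul_neg, neg_mul, neg_neg] at E11
    have E12 := LinearMap.congr_arg (f := Ψ 1 2) hp
    simp only [map_add, map_smul, map_neg, map_zero, Hcm1, hs.comul_g, hs.comul_ν, Hcmw, hΨ,
      F00, F01, F02, F03, F10, F11, F12, F13, F20, F21, F22, F23, F30, F31, F32, F33, smul_eq_mul, mul_one, one_mul, mul_zero, zero_mul, add_zero, zero_add,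
      neg_zero, mul_neg, neg_mul, neg_neg] at E12
    have E31 := LinearMap.congr_arg (f := Ψ 3 1) hp
    simp only [map_add, map_smul, map_neg, map_zero, Hcm1, hs.comul_g, hs.comul_ν, Hcmw, hΨ,
      F00, F01, F02, F03, F10, F11, F12, F13, F20, F21, F22, F23, F30, F31, F32, F33, smul_eq_mul, mul_one, one_mul, mul_zero, zero_mul, add_zero, zero_add,
      neg_zero, mul_neg, neg_mul, neg_neg] at E31
    have ha : a = 0 := by linear_combination -E00
    rw [hu, ha, E11, E12, E31]; simp
  -- ν ▷ 1 = 0 and (gν) ▷ 1 = 0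
  have Vone : t ν (1:H) = 0 := by
    refine prim0 _ ?_
    rw [ht.comul_hom, hs.comul_ν, Hcm1]
    simp [TensorProduct.add_tmul, G1, hone]
  have Wone : t (g*ν) (1:H) = 0 := by
    refine prim0 _ ?_
    rw [ht.comul_hom, Hcmw, Hcm1]
    simp [TensorProduct.add_tmul, G1, hone]
  refine ⟨hone, ?_⟩
  rcases hGG with hGg1 | hGg
  · -- Case (ii) : g ▷ g = 1
    have hGν0 : t g ν = 0 := by
      refine prim0 _ ?_
      rw [ht.comul_hom, hs.comul_g, hs.comul_ν]
      simp [TensorProduct.tmul_add, hGg1, G1]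
    have hGw0 : t g (g*ν) = 0 := by rw [mulg, hGν0, mul_zero]
    obtain ⟨aa, dd, hα⟩ : ∃ a d : k, t ν g = a • (1:H) + (-a) • g + d • (g*ν) := by
      obtain ⟨a, b, c, d, hu⟩ := exists_repr hs (t ν g)
      have hcm : comul (R:=k) (t ν g) = (1:H) ⊗ₜ[k] (t ν g) + (t ν g) ⊗ₜ[k] g := by
        rw [ht.comul_hom, hs.comul_ν, hs.comul_g]
        simp [TensorProduct.add_tmul, hGg1, hone]
      rw [hu] at hcm
      have E01 := LinearMap.congr_arg (f := Ψ 0 1) hcm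
      simp only [map_add, map_smul, map_neg, map_zero, Hcm1, hs.comul_g, hs.comul_ν, Hcmw, hΨ,
        F00, F01, F02, F03, F10, F11, F12, F13, F20, F21, F22, F23, F30, F31, F32, F33, smul_eq_mul, mul_one, one_mul, mul_zero, zero_mul, add_zero, zero_add,
        neg_zero, mul_neg, neg_mul, neg_neg] at E01
      have E12 := LinearMap.congr_arg (f := Ψ 1 2) hcm
      simp only [map_add, map_smul, map_neg, map_zero, Hcm1, hs.comul_g, hs.comul_ν, Hcmw, hΨ,
        F00, F01, F02, F03, F10, F11, F12, F13, F20, F21, F22, F23, F30, F31, F32, F33, smul_eq_mul, mul_one, one_mul, mul_zero, zero_mul, add_zero, zero_add,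
        neg_zero, mul_neg, neg_mul, neg_neg] at E12
      refine ⟨a, d, ?_⟩
      have hb : b = -a := by linear_combination -E01
      rw [hu, hb, E12, zero_smul, add_zero]
    obtain ⟨hβ, hdd⟩ : t ν ν = -(aa • ν) ∧ dd = 0 := by
      obtain ⟨p, q, r, s', hu⟩ := exists_repr hs (t ν ν)
      have hcm : comul (R:=k) (t ν ν)
          = (1:H) ⊗ₜ[k] (t ν ν) + (t ν g) ⊗ₜ[k] ν + (t ν ν) ⊗ₜ[k] (1:H) := by
        rw [ht.comul_hom, hs.comul_ν]
        simp [TensorProduct.add_tmul, TensorProduct.tmul_add, hGg1, hGν0, Vone, hone, h11]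
      rw [hu, hα] at hcm
      have E00 := LinearMap.congr_arg (f := Ψ 0 0) hcm
      simp only [map_add, map_smul, map_neg, map_zero, Hcm1, hs.comul_g, hs.comul_ν, Hcmw, hΨ,
        F00, F01, F02, F03, F10, F11, F12, F13, F20, F21, F22, F23, F30, F31, F32, F33, smul_eq_mul, mul_one, one_mul, mul_zero, zero_mul, add_zero, zero_add,
        neg_zero, mul_neg, neg_mul, neg_neg] at E00
      have E11 := LinearMap.congr_arg (f := Ψ 1 1) hcm
      simp only [map_add, map_smul, map_neg, map_zero, Hcm1, hs.comul_g, hs.comul_ν, Hcmw, hΨ,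
        F00, F01, F02, F03, F10, F11, F12, F13, F20, F21, F22, F23, F30, F31, F32, F33, smul_eq_mul, mul_one, one_mul, mul_zero, zero_mul, add_zero, zero_add,
        neg_zero, mul_neg, neg_mul, neg_neg] at E11
      have E12 := LinearMap.congr_arg (f := Ψ 1 2) hcm
      simp only [map_add, map_smul, map_neg, map_zero, Hcm1, hs.comul_g, hs.comul_ν, Hcmw, hΨ,
        F00, F01, F02, F03, F10, F11, F12, F13, F20, F21, F22, F23, F30, F31, F32, F33, smul_eq_mul, mul_one, one_mul, mul_zero, zero_mul, add_zero, zero_add,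
        neg_zero, mul_neg, neg_mul, neg_neg] at E12
      have E31 := LinearMap.congr_arg (f := Ψ 3 1) hcm
      simp only [map_add, map_smul, map_neg, map_zero, Hcm1, hs.comul_g, hs.comul_ν, Hcmw, hΨ,
        F00, F01, F02, F03, F10, F11, F12, F13, F20, F21, F22, F23, F30, F31, F32, F33, smul_eq_mul, mul_one, one_mul, mul_zero, zero_mul, add_zero, zero_add,
        neg_zero, mul_neg, neg_mul, neg_neg] at E31
      have E32 := LinearMap.congr_arg (f := Ψ 3 2) hcm
      simp only [map_add, map_smul, map_neg, map_zero, Hcm1, hs.comul_g, hs.comul_ν, Hcmw, hΨ,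
        F00, F01, F02, F03, F10, F11, F12, F13, F20, F21, F22, F23, F30, F31, F32, F33, smul_eq_mul, mul_one, one_mul, mul_zero, zero_mul, add_zero, zero_add,
        neg_zero, mul_neg, neg_mul, neg_neg] at E32
      have hp : p = 0 := by linear_combination -E00
      constructor
      · rw [hu, hp, E11, E12, E31]; simp
      · linear_combination -E32
    rw [hdd, zero_smul, add_zero] at hα
    have hνg2 : t ν g = aa • ((1:H) - g) := by rw [hα]; module
    have hVw : t ν (g*ν) = -(aa • (g*ν)) := by
      rw [mulν, hGg1, hβ, hνg2, one_mul, smul_mul_assoc, sub_mul, one_mul]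
      module
    have hWgen : ∀ z : H, t ν (t g z) + t (g*ν) z = aa • t g z - aa • z := by
      intro z
      have h := actν g z
      rw [hνg2, mul_smul_comm, mul_sub, mul_one, hs.g_sq, hνg, map_neg,
        LinearMap.neg_apply, map_smul, LinearMap.smul_apply, map_sub,
        LinearMap.sub_apply, hone] at h
      linear_combination (norm := module) h
    have hWg : t (g*ν) g = aa • ((1:H) - g) := by
      have h := hWgen g
      rw [hGg1, Vone] at h
      linear_combination (norm := module) h
    have hWν : t (g*ν) ν = -(aa • ν) := by
      have h := hWgen ν
      rw [hGν0, map_zero] at h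
      linear_combination (norm := module) h
    have hWw : t (g*ν) (g*ν) = -(aa • (g*ν)) := by
      have h := hWgen (g*ν)
      rw [hGw0, map_zero] at h
      linear_combination (norm := module) h
    right; left
    exact ⟨aa, G1, hGg1, hGν0, hGw0, Vone, hνg2, hβ, hVw, Wone, hWg, hWν, hWw⟩
  · -- g ▷ g = g
    have Vg : t ν g = 0 := by
      obtain ⟨a, b, c, d, hu⟩ := exists_repr hs (t ν g)
      have hcm : comul (R:=k) (t ν g) = g ⊗ₜ[k] (t ν g) + (t ν g) ⊗ₜ[k] g := by
        rw [ht.comul_hom, hs.comul_ν, hs.comul_g]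
        simp [TensorProduct.add_tmul, hGg, hone]
      rw [hu] at hcm
      have E00 := LinearMap.congr_arg (f := Ψ 0 0) hcm
      simp only [map_add, map_smul, map_neg, map_zero, Hcm1, hs.comul_g, hs.comul_ν, Hcmw, hΨ,
        F00, F01, F02, F03, F10, F11, F12, F13, F20, F21, F22, F23, F30, F31, F32, F33, smul_eq_mul, mul_one, one_mul, mul_zero, zero_mul, add_zero, zero_add,
        neg_zero, mul_neg, neg_mul, neg_neg] at E00
      have E11 := LinearMap.congr_arg (f := Ψ 1 1) hcm
      simp only [map_add, map_smul, map_neg, map_zero, Hcm1, hs.comul_g, hs.comul_ν, Hcmw, hΨ,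
        F00, F01, F02, F03, F10, F11, F12, F13, F20, F21, F22, F23, F30, F31, F32, F33, smul_eq_mul, mul_one, one_mul, mul_zero, zero_mul, add_zero, zero_add,
        neg_zero, mul_neg, neg_mul, neg_neg] at E11
      have E20 := LinearMap.congr_arg (f := Ψ 2 0) hcm
      simp only [map_add, map_smul, map_neg, map_zero, Hcm1, hs.comul_g, hs.comul_ν, Hcmw, hΨ,
        F00, F01, F02, F03, F10, F11, F12, F13, F20, F21, F22, F23, F30, F31, F32, F33, smul_eq_mul, mul_one, one_mul, mul_zero, zero_mul, add_zero, zero_add,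
        neg_zero, mul_neg, neg_mul, neg_neg] at E20
      have E03 := LinearMap.congr_arg (f := Ψ 0 3) hcm
      simp only [map_add, map_smul, map_neg, map_zero, Hcm1, hs.comul_g, hs.comul_ν, Hcmw, hΨ,
        F00, F01, F02, F03, F10, F11, F12, F13, F20, F21, F22, F23, F30, F31, F32, F33, smul_eq_mul, mul_one, one_mul, mul_zero, zero_mul, add_zero, zero_add,
        neg_zero, mul_neg, neg_mul, neg_neg] at E03
      have hb : b = 0 := by linear_combination -E11
      rw [hu, E00, hb, E20, E03]; simp
    obtain ⟨sc, hGν⟩ : ∃ c : k, t g ν = c • ν := by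
      obtain ⟨sa, sb, c, sd, hu⟩ := exists_repr hs (t g ν)
      have hcm : comul (R:=k) (t g ν) = g ⊗ₜ[k] (t g ν) + (t g ν) ⊗ₜ[k] (1:H) := by
        rw [ht.comul_hom, hs.comul_g, hs.comul_ν]
        simp [TensorProduct.tmul_add, hGg, G1]
      rw [hu] at hcm
      have E10 := LinearMap.congr_arg (f := Ψ 1 0) hcm
      simp only [map_add, map_smul, map_neg, map_zero, Hcm1, hs.comul_g, hs.comul_ν, Hcmw, hΨ,
        F00, F01, F02, F03, F10, F11, F12, F13, F20, F21, F22, F23, F30, F31, F32, F33, smul_eq_mul, mul_one, one_mul, mul_zero, zero_mul, add_zero, zero_add,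
        neg_zero, mul_neg, neg_mul, neg_neg] at E10
      have E31 := LinearMap.congr_arg (f := Ψ 3 1) hcm
      simp only [map_add, map_smul, map_neg, map_zero, Hcm1, hs.comul_g, hs.comul_ν, Hcmw, hΨ,
        F00, F01, F02, F03, F10, F11, F12, F13, F20, F21, F22, F23, F30, F31, F32, F33, smul_eq_mul, mul_one, one_mul, mul_zero, zero_mul, add_zero, zero_add,
        neg_zero, mul_neg, neg_mul, neg_neg] at E31
      have hsq : t g ν * t g ν = 0 := by
        have h := mulg ν ν; rw [hs.ν_sq, map_zero] at h; exact h.symm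
      rw [hu] at hsq
      simp only [mul_add, add_mul, smul_mul_assoc, mul_smul_comm, smul_smul, one_mul,
        mul_one, hs.g_sq, hs.ν_sq, hνg, hgw, hwg, hνw, hwν, hww, mul_neg, neg_mul,
        smul_neg, mul_zero, zero_mul, smul_zero, add_zero, zero_add, neg_zero,
        neg_neg] at hsq
      have P0 := LinearMap.congr_arg (f := φ 0) hsq
      simp only [map_add, map_smul, map_neg, map_zero,
        F00, F01, F02, F03, F10, F11, F12, F13, F20, F21, F22, F23, F30, F31, F32, F33, smul_eq_mul, mul_one, one_mul, mul_zero, zero_mul, add_zero, zero_add,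
        neg_zero, mul_neg, neg_mul, neg_neg] at P0
      have hsa : sa = 0 := mul_self_eq_zero.mp (by linear_combination P0/2 - ((sa - sb)/2) * E10)
      have hsb : sb = 0 := by linear_combination -E10 - hsa
      refine ⟨c, ?_⟩
      rw [hu, hsa, hsb, E31]; simp
    have hinv : ∀ z : H, t g (t g z) = z := by
      intro z
      rw [actg g z, hGg, hs.g_sq, hone]
    have hc2 : sc * sc = 1 := by
      have h := hinv ν
      rw [hGν, map_smul, hGν, smul_smul] at h
      have P2 := LinearMap.congr_arg (f := φ 2) h
      simp only [map_smul, F22, smul_eq_mul, mul_one] at P2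
      exact P2
    have hGw : t g (g*ν) = sc • (g*ν) := by
      rw [mulg, hGg, hGν, mul_smul_comm]
    obtain ⟨rr, hβ⟩ : ∃ r : k, t ν ν = r • ν := by
      obtain ⟨p, q, r, s', hu⟩ := exists_repr hs (t ν ν)
      have hcm : comul (R:=k) (t ν ν) = g ⊗ₜ[k] (t ν ν) + (t ν ν) ⊗ₜ[k] (1:H) := by
        rw [ht.comul_hom, hs.comul_ν]
        simp [TensorProduct.add_tmul, TensorProduct.tmul_add, hGg, hGν, Vg, Vone, hone, h11]
      rw [hu] at hcm
      have E10 := LinearMap.congr_arg (f := Ψ 1 0) hcm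
      simp only [map_add, map_smul, map_neg, map_zero, Hcm1, hs.comul_g, hs.comul_ν, Hcmw, hΨ,
        F00, F01, F02, F03, F10, F11, F12, F13, F20, F21, F22, F23, F30, F31, F32, F33, smul_eq_mul, mul_one, one_mul, mul_zero, zero_mul, add_zero, zero_add,
        neg_zero, mul_neg, neg_mul, neg_neg] at E10
      have E31 := LinearMap.congr_arg (f := Ψ 3 1) hcm
      simp only [map_add, map_smul, map_neg, map_zero, Hcm1, hs.comul_g, hs.comul_ν, Hcmw, hΨ,
        F00, F01, F02, F03, F10, F11, F12, F13, F20, F21, F22, F23, F30, F31, F32, F33, smul_eq_mul, mul_one, one_mul, mul_zero, zero_mul, add_zero, zero_add,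
        neg_zero, mul_neg, neg_mul, neg_neg] at E31
      have h0 := mulν ν ν
      rw [hs.ν_sq, map_zero, hGν, hu] at h0
      simp only [mul_add, add_mul, smul_mul_assoc, mul_smul_comm, smul_smul, one_mul,
        mul_one, hs.g_sq, hs.ν_sq, hνg, hgw, hwg, hνw, hwν, hww, mul_neg, neg_mul,
        smul_neg, mul_zero, zero_mul, smul_zero, add_zero, zero_add, neg_zero,
        neg_neg] at h0
      have P2 := LinearMap.congr_arg (f := φ 2) h0
      simp only [map_add, map_smul, map_neg, map_zero,
        F00, F01, F02, F03, F10, F11, F12, F13, F20, F21, F22, F23, F30, F31, F32, F33, smul_eq_mul, mul_one, one_mul, mul_zero, zero_mul, add_zero, zero_add,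
        neg_zero, mul_neg, neg_mul, neg_neg] at P2
      have P3 := LinearMap.congr_arg (f := φ 3) h0
      simp only [map_add, map_smul, map_neg, map_zero,
        F00, F01, F02, F03, F10, F11, F12, F13, F20, F21, F22, F23, F30, F31, F32, F33, smul_eq_mul, mul_one, one_mul, mul_zero, zero_mul, add_zero, zero_add,
        neg_zero, mul_neg, neg_mul, neg_neg] at P3
      have hq : q = -p := by linear_combination -E10
      have hp : p = 0 := by linear_combination -P2/2 + P3/2 + ((1-sc)/2) * hq
      have hq0 : q = 0 := by rw [hq, hp, neg_zero]
      refine ⟨r, ?_⟩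
      rw [hu, hp, hq0, E31]; simp
    have hVw : t ν (g*ν) = rr • (g*ν) := by
      rw [mulν, hGg, hβ, Vg, zero_mul, add_zero, mul_smul_comm]
    have hWz : ∀ z : H, t (g*ν) z = sc • t g (t ν z) := by
      intro z
      have h := actg ν z
      rw [hGν, mul_smul_comm, map_smul, LinearMap.smul_apply] at h
      calc t (g*ν) z = (sc*sc) • t (g*ν) z := by rw [hc2, one_smul]
        _ = sc • t g (t ν z) := by rw [mul_smul, ← h]
    have hWg : t (g*ν) g = 0 := by rw [hWz, Vg, map_zero, smul_zero]
    have hWν : t (g*ν) ν = rr • ν := by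
      rw [hWz, hβ, map_smul, hGν, smul_smul, smul_smul]
      rw [show sc * rr * sc = rr by linear_combination rr * hc2]
    have hWw : t (g*ν) (g*ν) = rr • (g*ν) := by
      rw [hWz, hVw, map_smul, hGw, smul_smul, smul_smul]
      rw [show sc * rr * sc = rr by linear_combination rr * hc2]
    have hsplit : (sc - 1) * (sc + 1) = 0 := by linear_combination hc2
    rcases mul_eq_zero.mp hsplit with h1 | h1
    · -- sc = 1 : family (iii)
      have hsc : sc = 1 := by linear_combination h1
      have hr : rr = 0 := by
        have h := actν g ν
        rw [hGν, map_smul, hβ, Vg, mul_zero, map_zero, LinearMap.zero_apply, zero_add,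
          hνg, map_neg, LinearMap.neg_apply, hWν, hsc, one_smul] at h
        have P2 := LinearMap.congr_arg (f := φ 2) h
        simp only [map_smul, map_neg, F22, smul_eq_mul, mul_one] at P2
        linear_combination P2/2
      right; right
      refine ⟨G1, hGg, ?_, ?_, Vone, Vg, ?_, ?_, Wone, hWg, ?_, ?_⟩
      · rw [hGν, hsc, one_smul]
      · rw [hGw, hsc, one_smul]
      · rw [hβ, hr, zero_smul]
      · rw [hVw, hr, zero_smul]
      · rw [hWν, hr, zero_smul]
      · rw [hWw, hr, zero_smul]
    · -- sc = -1 : family (i)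
      have hsc : sc = -1 := by linear_combination h1
      left
      refine ⟨rr, G1, hGg, ?_, ?_, Vone, Vg, hβ, hVw, Wone, hWg, hWν, hWw⟩
      · rw [hGν, hsc, neg_smul, one_smul]
      · rw [hGw, hsc, neg_smul, one_smul]
end

section
/- For every a ∈ k, the bilinear operation ▷ on Sweedler's 4-dimensional Hopf algebra H₄ defined on the basis by: 1▷1 = 1, 1▷g = g, 1▷ν = ν, 1▷gν = gν; g▷1 = 1, g▷g = 1, g▷ν = 0, g▷gν = 0; ν▷1 = 0, ν▷g = a - a·g, ν▷ν = -aν, ν▷gν = -a·gν; gν▷1 = 0, gν▷g = a - a·g, gν▷ν = -aν, gν▷gν = -a·gν, is a relaxed weak post-Hopf structure on H₄ (structure (ii)). -/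
open TensorProduct Coalgebra

theorem sweedler_span_induction {k M : Type*} [Field k] [AddCommGroup M] [Module k M]
    {s : Set M} (hspan : Submodule.span k s = ⊤) {P : M → Prop}
    (mem : ∀ x ∈ s, P x) (zero : P 0)
    (add : ∀ x y, P x → P y → P (x + y))
    (smul : ∀ (c : k) (x : M), P x → P (c • x)) (x : M) : P x := by
  have hx : x ∈ Submodule.span k s := by rw [hspan]; exact Submodule.mem_top
  exact Submodule.span_induction (p := fun y _ => P y) mem zero
    (fun u v _ _ => add u v) (fun c u _ => smul c u) hx


set_option maxHeartbeats 3200000 in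
/-- For every `a ∈ k`, the bilinear operation given by table (ii) is a relaxed weak
post-Hopf structure on Sweedler's Hopf algebra. -/
theorem sweedler_form_ii_isRelaxedWeakPostHopf {k H : Type*} [Field k] [CharZero k] [Ring H] [HopfAlgebra k H]
    (g ν : H) (hs : IsSweedlerHopf k g ν)
    (a : k) (t : H →ₗ[k] H →ₗ[k] H)
    (htable : t (1 : H) (1 : H) = (1 : H) ∧
      t (1 : H) g = g ∧
      t (1 : H) ν = ν ∧
      t (1 : H) (g * ν) = (g * ν) ∧
      t g (1 : H) = (1 : H) ∧
      t g g = (1 : H) ∧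
      t g ν = 0 ∧
      t g (g * ν) = 0 ∧
      t ν (1 : H) = 0 ∧
      t ν g = a • ((1 : H) - g) ∧
      t ν ν = -(a • ν) ∧
      t ν (g * ν) = -(a • (g * ν)) ∧
      t (g * ν) (1 : H) = 0 ∧
      t (g * ν) g = a • ((1 : H) - g) ∧
      t (g * ν) ν = -(a • ν) ∧
      t (g * ν) (g * ν) = -(a • (g * ν))) :
    IsRelaxedWeakPostHopf k t := by
  obtain ⟨T11, T1g, T1n, T1w, Tg1, Tgg, Tgn, Tgw, Tn1, Tng, Tnn, Tnw, Tw1, Twg, Twn, Tww⟩ := htable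
  have hgg := hs.g_sq
  have hnn := hs.ν_sq
  have hng : ν * g = -(g * ν) := eq_neg_of_add_eq_zero_right hs.anticomm
  have hgw : g * (g * ν) = ν := by rw [← mul_assoc, hgg, one_mul]
  have hnw : ν * (g * ν) = 0 := by
    rw [← mul_assoc, hng, neg_mul, mul_assoc, hnn, mul_zero, neg_zero]
  have hwg : (g * ν) * g = -ν := by
    rw [mul_assoc, hng, mul_neg, hgw]
  have hwn : (g * ν) * ν = 0 := by rw [mul_assoc, hnn, mul_zero]
  have hww : (g * ν) * (g * ν) = 0 := by rw [mul_assoc, hnw, mul_zero]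
  have hc1 : comul (R := k) (1 : H) = (1 : H) ⊗ₜ[k] (1 : H) := by
    rw [Bialgebra.comul_one, Algebra.TensorProduct.one_def]
  have hcg := hs.comul_g
  have hcn := hs.comul_ν
  have hcw : comul (R := k) (g * ν) = (1 : H) ⊗ₜ[k] (g * ν) + (g * ν) ⊗ₜ[k] g := by
    rw [Bialgebra.comul_mul, hcg, hcn]
    simp only [mul_add, Algebra.TensorProduct.tmul_mul_tmul, hgg, mul_one]
  have he1 : counit (R := k) (1 : H) = 1 := Bialgebra.counit_one
  have heg := hs.counit_g
  have hen := hs.counit_ν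
  have hew : counit (R := k) (g * ν) = 0 := by rw [Bialgebra.counit_mul, hen, mul_zero]
  have hmem : ∀ x ∈ ({(1 : H), g, ν, g * ν} : Set H), x = 1 ∨ x = g ∨ x = ν ∨ x = g * ν := by
    intro x hx; simpa using hx
  constructor
  · -- comul_hom
    refine sweedler_span_induction hs.basis_span ?_ ?_ ?_ ?_
    · intro x hx
      refine sweedler_span_induction hs.basis_span ?_ ?_ ?_ ?_
      · intro y hy
        obtain rfl | rfl | rfl | rfl := hmem x hx <;>
          obtain rfl | rfl | rfl | rfl := hmem y hy <;>
          simp [hc1, hcg, hcn, hcw, T11, T1g, T1n, T1w, Tg1, Tgg, Tgn, Tgw, Tn1, Tng,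
            Tnn, Tnw, Tw1, Twg, Twn, Tww, tensorTensorTensorComm_tmul, lift.tmul,
            tmul_add, add_tmul, smul_sub, sub_tmul, tmul_sub, ← smul_tmul', tmul_smul,
            neg_tmul, tmul_neg, smul_smul, smul_neg, neg_smul] <;>
          abel
      · simp
      · intro u v hu hv
        simp only [map_add, LinearMap.add_apply, tmul_add, hu, hv]
      · intro c u hu
        simp only [map_smul, LinearMap.smul_apply, tmul_smul, hu]
    · intro y; simp
    · intro u v hu hv y
      simp only [map_add, LinearMap.add_apply, add_tmul, hu y, hv y]
    · intro c u hu y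
      simp only [map_smul, LinearMap.smul_apply, ← smul_tmul', hu y]
  · -- counit_hom
    refine sweedler_span_induction hs.basis_span ?_ ?_ ?_ ?_
    · intro x hx
      refine sweedler_span_induction hs.basis_span ?_ ?_ ?_ ?_
      · intro y hy
        obtain rfl | rfl | rfl | rfl := hmem x hx <;>
          obtain rfl | rfl | rfl | rfl := hmem y hy <;>
          simp [he1, heg, hen, hew, T11, T1g, T1n, T1w, Tg1, Tgg, Tgn, Tgw, Tn1, Tng,
            Tnn, Tnw, Tw1, Twg, Twn, Tww, smul_sub]
      · simp
      · intro u v hu hv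
        simp only [map_add, LinearMap.add_apply, mul_add, hu, hv]
      · intro c u hu
        simp only [map_smul, LinearMap.smul_apply, smul_eq_mul, hu]; ring
    · intro y; simp
    · intro u v hu hv y
      simp only [map_add, LinearMap.add_apply, add_mul, hu y, hv y]
    · intro c u hu y
      simp only [map_smul, LinearMap.smul_apply, smul_eq_mul, hu y]; ring
  · -- mul_compat
    refine sweedler_span_induction hs.basis_span ?_ ?_ ?_ ?_
    · intro x hx
      refine sweedler_span_induction hs.basis_span ?_ ?_ ?_ ?_
      · intro y hy
        refine sweedler_span_induction hs.basis_span ?_ ?_ ?_ ?_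
        · intro z hz
          obtain rfl | rfl | rfl | rfl := hmem x hx <;>
            obtain rfl | rfl | rfl | rfl := hmem y hy <;>
            obtain rfl | rfl | rfl | rfl := hmem z hz <;>
            simp [hc1, hcg, hcn, hcw, hgg, hnn, hng, hgw, hnw, hwg, hwn, hww,
              T11, T1g, T1n, T1w, Tg1, Tgg, Tgn, Tgw, Tn1, Tng, Tnn, Tnw, Tw1, Twg,
              Twn, Tww, LinearMap.mul'_apply, smul_sub, sub_mul, mul_sub, smul_smul, neg_mul, mul_neg,
              smul_neg, neg_smul, ← smul_tmul', tmul_smul, neg_tmul, tmul_neg,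
              mul_smul_comm, smul_mul_assoc] <;>
            abel
        · simp
        · intro u v hu hv
          simp only [mul_add, map_add, LinearMap.comp_apply, map_add_right,
            LinearMap.add_apply, hu, hv]
        · intro c u hu
          simp only [mul_smul_comm, map_smul, LinearMap.comp_apply, map_smul_right,
            LinearMap.smul_apply, hu]
      · intro z; simp
      · intro u v hu hv z
        simp only [add_mul, map_add, LinearMap.comp_apply, map_add_left,
          LinearMap.add_apply, hu z, hv z]
      · intro c u hu z
        simp only [smul_mul_assoc, map_smul, LinearMap.comp_apply, map_smul_left,
          LinearMap.smul_apply, hu z]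
    · intro y z; simp
    · intro u v hu hv y z
      simp only [map_add, LinearMap.add_apply, hu y z, hv y z]
    · intro c u hu y z
      simp only [map_smul, LinearMap.smul_apply, hu y z]
  · -- act_compat
    refine sweedler_span_induction hs.basis_span ?_ ?_ ?_ ?_
    · intro x hx
      refine sweedler_span_induction hs.basis_span ?_ ?_ ?_ ?_
      · intro y hy
        refine sweedler_span_induction hs.basis_span ?_ ?_ ?_ ?_
        · intro z hz
          obtain rfl | rfl | rfl | rfl := hmem x hx <;>
            obtain rfl | rfl | rfl | rfl := hmem y hy <;>
            obtain rfl | rfl | rfl | rfl := hmem z hz <;>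
            simp [hc1, hcg, hcn, hcw, hgg, hnn, hng, hgw, hnw, hwg, hwn, hww,
              T11, T1g, T1n, T1w, Tg1, Tgg, Tgn, Tgw, Tn1, Tng, Tnn, Tnw, Tw1, Twg,
              Twn, Tww, LinearMap.mul'_apply, smul_sub, sub_mul, mul_sub, smul_smul, neg_mul, mul_neg,
              smul_neg, neg_smul, ← smul_tmul', tmul_smul, neg_tmul, tmul_neg,
              mul_smul_comm, smul_mul_assoc, map_sub] <;>
            abel
        · simp
        · intro u v hu hv
          simp only [map_add, LinearMap.comp_apply, LinearMap.add_apply, hu, hv]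
        · intro c u hu
          simp only [map_smul, LinearMap.comp_apply, LinearMap.smul_apply, hu]
      · intro z; simp
      · intro u v hu hv z
        simp only [map_add, LinearMap.comp_apply, map_add_right, LinearMap.add_apply,
          hu z, hv z]
      · intro c u hu z
        simp only [map_smul, LinearMap.comp_apply, map_smul_right,
          LinearMap.smul_apply, hu z]
    · intro y z; simp
    · intro u v hu hv y z
      simp only [map_add, LinearMap.add_apply, hu y z, hv y z]
    · intro c u hu y z
      simp only [map_smul, LinearMap.smul_apply, hu y z]
end

section
/- The bilinear operation ▷ on Sweedler's 4-dimensional Hopf algebra H₄ defined on the basis by: 1▷x = x and g▷x = x for all x ∈ {1, g, ν, gν}, and ν▷x = 0 and gν▷x = 0 for all x ∈ {1, g, ν, gν}, is a relaxed weak post-Hopf structure on H₄ (structure (iii)). -/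
open TensorProduct Coalgebra

set_option maxHeartbeats 2000000 in
/-- The bilinear operation given by table (iii) is a relaxed weak post-Hopf structure on
Sweedler's Hopf algebra. -/
theorem sweedler_form_iii_isRelaxedWeakPostHopf {k H : Type*} [Field k] [CharZero k] [Ring H] [HopfAlgebra k H]
    (g ν : H) (hs : IsSweedlerHopf k g ν)
    (t : H →ₗ[k] H →ₗ[k] H)
    (htable : t (1 : H) (1 : H) = (1 : H) ∧
      t (1 : H) g = g ∧
      t (1 : H) ν = ν ∧
      t (1 : H) (g * ν) = (g * ν) ∧
      t g (1 : H) = (1 : H) ∧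
      t g g = g ∧
      t g ν = ν ∧
      t g (g * ν) = (g * ν) ∧
      t ν (1 : H) = 0 ∧
      t ν g = 0 ∧
      t ν ν = 0 ∧
      t ν (g * ν) = 0 ∧
      t (g * ν) (1 : H) = 0 ∧
      t (g * ν) g = 0 ∧
      t (g * ν) ν = 0 ∧
      t (g * ν) (g * ν) = 0) :
    IsRelaxedWeakPostHopf k t := by
  classical
  obtain ⟨h11, h1g, h1v, h1gv, hg1, hgg, hgv, hggv, hv1, hvg, hvv, hvgv,
    hgv1, hgvg, hgvv, hgvgv⟩ := htable
  -- counit values on the basis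
  have e1 : counit (R := k) (1 : H) = 1 := Bialgebra.counit_one
  have eg : counit (R := k) g = 1 := hs.counit_g
  have ev : counit (R := k) ν = 0 := hs.counit_ν
  have egv : counit (R := k) (g * ν) = 0 := by
    rw [Bialgebra.counit_mul, eg, ev, one_mul]
  -- `t x y = counit x • y`
  have hT : t = (LinearMap.lsmul k H) ∘ₗ (counit (R := k)) := by
    apply LinearMap.ext_on hs.basis_span
    intro x hx
    apply LinearMap.ext_on hs.basis_span
    intro y hy
    simp only [Set.mem_insert_iff, Set.mem_singleton_iff] at hx hy
    rcases hx with rfl | rfl | rfl | rfl <;> rcases hy with rfl | rfl | rfl | rfl <;>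
      simp_all [LinearMap.lsmul_apply]
  have ht : ∀ x y : H, t x y = counit (R := k) x • y := by
    intro x y; rw [hT]; rfl
  -- the key Sweedler scalar identity : ∑ ε(x₁) ε(x₂) = ε(x)
  have scal : ∀ (x : H) (r : Coalgebra.Repr k x (H × H)),
      ∑ i ∈ r.index, counit (R := k) (r.left i) * counit (R := k) (r.right i)
        = counit (R := k) x := by
    intro x r
    have h := Coalgebra.sum_tmul_counit_eq (R := k) r
    have h2 := congrArg
      (TensorProduct.lift ((LinearMap.lsmul k k) ∘ₗ (counit (R := k) (A := H)))) h
    simpa only [map_sum, TensorProduct.lift.tmul, LinearMap.comp_apply,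
      LinearMap.lsmul_apply, smul_eq_mul, mul_one] using h2
  constructor
  · -- comul_hom
    intro x y
    set rx := ℛ k x with hrx
    set ry := ℛ k y with hry
    rw [← rx.eq, ← ry.eq, ht]
    have : comul (R := k) (counit (R := k) x • y) = counit (R := k) x • comul (R := k) y :=
      map_smul _ _ _
    rw [this, ← ry.eq]
    rw [← scal x rx]
    simp only [TensorProduct.sum_tmul, TensorProduct.tmul_sum, map_sum,
      TensorProduct.tensorTensorTensorComm_tmul, TensorProduct.map_tmul,
      TensorProduct.lift.tmul, ht, TensorProduct.smul_tmul', TensorProduct.tmul_smul,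
      smul_smul, Finset.smul_sum, Finset.sum_smul]
    exact Finset.sum_congr rfl fun j _ => Finset.sum_congr rfl fun i _ => by
      rw [mul_comm]
  · -- counit_hom
    intro x y
    rw [ht, map_smul, smul_eq_mul]
  · -- mul_compat
    intro x y z
    set rx := ℛ k x with hrx
    rw [ht, LinearMap.comp_apply, ← rx.eq, ← scal x rx]
    simp only [map_sum, TensorProduct.map_tmul, LinearMap.flip_apply, ht,
      LinearMap.mul'_apply, smul_mul_smul_comm, Finset.sum_smul]
  · -- act_compat
    intro x y z
    set rx := ℛ k x with hrx
    rw [ht, ht, smul_smul, LinearMap.comp_apply, LinearMap.comp_apply, ← rx.eq,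
      ← scal x rx]
    simp only [map_sum, TensorProduct.map_tmul, LinearMap.id_coe, id_eq,
      LinearMap.flip_apply, ht, LinearMap.mul'_apply, mul_smul_comm, map_smul,
      Bialgebra.counit_mul, Finset.sum_smul, smul_smul]
    rw [Finset.sum_mul, Finset.sum_smul]
    exact Finset.sum_congr rfl fun i _ => by rw [mul_comm (counit (R := k) (rx.left i)), mul_assoc]
end
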